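/- arXiv:1001.3486 — 5 statements merged into one kernel-verified Lean document; each statement's English description precedes it below -/
import Mathlib

section
/- For any finite alphabets 𝒳 and 𝒴 and any joint probability mass function P_XY on 𝒳×𝒴 with 𝒳-marginal P_X, there exist a finite alphabet 𝒵 with |𝒵| ≤ |𝒳|(|𝒴|−1)+1, a probability mass function P_Z on 𝒵, and a function ξ: 𝒳×𝒵 → 𝒴, such that the pushforward of the product measure P_X ⊗ P_Z under the map (x,z) ↦ (x, ξ(x,z)) equals P_XY; equivalently, if X ∼ P_X and Z ∼ P_Z are independent random variables, then the pair (X, ξ(X,Z)) has joint distribution P_XY. -/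
/-!
Write `PXY (x, y) = PX x * Q x y` with `Q` a stochastic matrix, and decompose `Q` greedily into
deterministic maps: choose a positive entry `(x, g x)` in every row, let `ε` be the smallest of them
and subtract `ε` from these entries. This removes `ε • 𝟙[g x = y]` and leaves a nonnegative matrix
with equal row sums and at least one positive entry fewer. A matrix with positive row sums has at
least `|𝒳|` positive entries, so the process stops after at most `|𝒳| |𝒴| - |𝒳| + 1` steps. Then
`Z` picks the step `i` with probability `ε_i` and `ξ (x, i) = g_i x`.
-/

open Finset

theorem Fin.sum_filter_cons {M β : Type*} [AddCommMonoid M] {m : ℕ} (p : β → Prop)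
    [DecidablePred p] (b : β) (bs : Fin m → β) (a : M) (as : Fin m → M) :
    ∑ i ∈ univ.filter (fun i => p ((Fin.cons b bs : Fin (m + 1) → β) i)),
        (Fin.cons a as : Fin (m + 1) → M) i =
      (if p b then a else 0) + ∑ i ∈ univ.filter (fun i => p (bs i)), as i := by
  simp only [sum_filter, Fin.sum_univ_succ, Fin.cons_zero, Fin.cons_succ]

section StochasticMatrix

variable {𝒳 𝒴 : Type*}

theorem exists_condKernel [Fintype 𝒴] [Nonempty 𝒴] (PXY : 𝒳 × 𝒴 → ℝ) (hPXY0 : ∀ p, 0 ≤ PXY p)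
    (PX : 𝒳 → ℝ) (hPX : ∀ x, PX x = ∑ y, PXY (x, y)) :
    ∃ Q : 𝒳 → 𝒴 → ℝ, (∀ x y, 0 ≤ Q x y) ∧ (∀ x, ∑ y, Q x y = 1) ∧
      ∀ x y, PX x * Q x y = PXY (x, y) := by
  -- on rows with `PX x = 0` any probability vector will do; we take the uniform one
  refine ⟨fun x y => if PX x = 0 then (Fintype.card 𝒴 : ℝ)⁻¹ else PXY (x, y) / PX x,
    fun x y => ?_, fun x => ?_, fun x y => ?_⟩ <;>
    by_cases hx : PX x = 0 <;> simp only [hx, if_true, if_false]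
  · positivity
  · exact div_nonneg (hPXY0 _) (hPX x ▸ sum_nonneg fun y _ => hPXY0 (x, y))
  · simp
  · rw [← sum_div, ← hPX, div_self hx]
  · rw [zero_mul, ((sum_eq_zero_iff_of_nonneg fun y _ => hPXY0 (x, y)).1
      (hPX x ▸ hx) y (mem_univ y))]
  · exact mul_div_cancel₀ _ hx

section Peel

variable [DecidableEq 𝒴]

def peel (Q : 𝒳 → 𝒴 → ℝ) (g : 𝒳 → 𝒴) (ε : ℝ) (x : 𝒳) (y : 𝒴) : ℝ :=
  Q x y - if g x = y then ε else 0

theorem sum_peel [Fintype 𝒴] (Q : 𝒳 → 𝒴 → ℝ) (g : 𝒳 → 𝒴) (ε : ℝ) (x : 𝒳) :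
    ∑ y, peel Q g ε x y = ∑ y, Q x y - ε := by
  simp [peel, sum_sub_distrib]

theorem peel_nonneg {Q : 𝒳 → 𝒴 → ℝ} {g : 𝒳 → 𝒴} {ε : ℝ} (hQ : ∀ x y, 0 ≤ Q x y)
    (hε : ∀ x, ε ≤ Q x (g x)) (x : 𝒳) (y : 𝒴) : 0 ≤ peel Q g ε x y := by
  unfold peel
  split_ifs with h
  · exact sub_nonneg.2 (h ▸ hε x)
  · simpa using hQ x y

end Peel

variable [Fintype 𝒳] [Fintype 𝒴]

noncomputable def posSupport (Q : 𝒳 → 𝒴 → ℝ) : Finset (𝒳 × 𝒴) := univ.filter fun p => 0 < Q p.1 p.2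

theorem card_le_card_posSupport {Q : 𝒳 → 𝒴 → ℝ} {g : 𝒳 → 𝒴} (hg : ∀ x, 0 < Q x (g x)) :
    Fintype.card 𝒳 ≤ #(posSupport Q) :=
  card_univ (α := 𝒳) ▸ card_le_card_of_injOn (fun x => (x, g x))
    (fun x _ => by simp [posSupport, hg x]) (fun _ _ _ _ h => congrArg Prod.fst h)

variable [DecidableEq 𝒴]

theorem posSupport_peel_ssubset {Q : 𝒳 → 𝒴 → ℝ} {g : 𝒳 → 𝒴} {x₀ : 𝒳}
    (hpos : 0 < Q x₀ (g x₀)) : posSupport (peel Q g (Q x₀ (g x₀))) ⊂ posSupport Q := by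
  have hle : ∀ x y, peel Q g (Q x₀ (g x₀)) x y ≤ Q x y := fun x y => by
    unfold peel; split_ifs <;> linarith
  refine (ssubset_iff_of_subset fun p hp => ?_).2 ⟨(x₀, g x₀), ?_, ?_⟩
  · simp only [posSupport, mem_filter, mem_univ, true_and] at hp ⊢
    exact hp.trans_le (hle _ _)
  · simpa [posSupport] using hpos
  · simp [posSupport, peel]

/-- The bound on `m` uses truncated subtraction: for `s = 0` the decomposition is empty. -/
theorem exists_deterministic_decomposition [Nonempty 𝒳] (Q : 𝒳 → 𝒴 → ℝ)
    (hQ : ∀ x y, 0 ≤ Q x y) (s : ℝ) (hrow : ∀ x, ∑ y, Q x y = s) :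
    ∃ (m : ℕ) (w : Fin m → ℝ) (f : Fin m → 𝒳 → 𝒴),
      m ≤ #(posSupport Q) + 1 - Fintype.card 𝒳 ∧ (∀ i, 0 ≤ w i) ∧ ∑ i, w i = s ∧
        ∀ x y, ∑ i ∈ univ.filter (fun i => f i x = y), w i = Q x y := by
  induction hn : #(posSupport Q) using Nat.strong_induction_on generalizing Q s with
  | _ n ih =>
  have hs : 0 ≤ s := hrow (Classical.arbitrary 𝒳) ▸ sum_nonneg fun y _ => hQ _ y
  obtain rfl | hs := hs.eq_or_lt
  · refine ⟨0, Fin.elim0, Fin.elim0, Nat.zero_le _, fun i => i.elim0, by simp, fun x y => ?_⟩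
    simp [(sum_eq_zero_iff_of_nonneg fun y _ => hQ x y).1 (hrow x) y (mem_univ y)]
  have hrowpos : ∀ x, ∃ y, 0 < Q x y := fun x => by
    obtain ⟨y, -, hy⟩ := exists_lt_of_sum_lt (s := univ) (f := 0) (g := Q x)
      (by simpa [hrow x] using hs)
    exact ⟨y, hy⟩
  choose g hg using hrowpos
  obtain ⟨x₀, hx₀⟩ := Finite.exists_min fun x => Q x (g x)
  have hlt := card_lt_card (posSupport_peel_ssubset (hg x₀))
  obtain ⟨m, w, f, hm, hw, hws, hrep⟩ := ih _ (hn ▸ hlt) (peel Q g (Q x₀ (g x₀)))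
    (peel_nonneg hQ hx₀) (s - Q x₀ (g x₀)) (fun x => by rw [sum_peel, hrow]) rfl
  have hcard := card_le_card_posSupport hg
  refine ⟨m + 1, Fin.cons (Q x₀ (g x₀)) w, Fin.cons g f, by omega,
    Fin.cases (hg x₀).le hw, by simp [Fin.sum_cons, hws], fun x y => ?_⟩
  rw [Fin.sum_filter_cons (fun h : 𝒳 → 𝒴 => h x = y), hrep]
  simp [peel]

end StochasticMatrix

/-- **Functional representation lemma** (Lemma 1 of the paper).
For finite alphabets `𝒳`, `𝒴` and a joint pmf `PXY` on `𝒳 × 𝒴` with `𝒳`-marginal `PX`,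
there is a finite alphabet `𝒵 = Fin m` with `m ≤ |𝒳|(|𝒴|-1)+1`, a pmf `PZ` on it and a
function `ξ : 𝒳 × 𝒵 → 𝒴` such that the pushforward of the product pmf `PX ⊗ PZ` under
`(x,z) ↦ (x, ξ(x,z))` equals `PXY`; i.e. if `X ∼ PX` and `Z ∼ PZ` are independent then
`(X, ξ(X,Z)) ∼ PXY`. -/
theorem stmt_0 {𝒳 𝒴 : Type*} [Fintype 𝒳] [Fintype 𝒴] [DecidableEq 𝒴]
    (PXY : 𝒳 × 𝒴 → ℝ)
    (hPXY0 : ∀ p, 0 ≤ PXY p) (hPXY1 : ∑ p : 𝒳 × 𝒴, PXY p = 1)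
    (PX : 𝒳 → ℝ) (hPX : ∀ x, PX x = ∑ y : 𝒴, PXY (x, y)) :
    ∃ (m : ℕ) (PZ : Fin m → ℝ) (ξ : 𝒳 × Fin m → 𝒴),
      m ≤ Fintype.card 𝒳 * (Fintype.card 𝒴 - 1) + 1 ∧
      (∀ z, 0 ≤ PZ z) ∧ (∑ z, PZ z = 1) ∧
      (∀ x y, ∑ z ∈ Finset.univ.filter (fun z => ξ (x, z) = y), PX x * PZ z = PXY (x, y)) := by
  obtain ⟨_, _⟩ : Nonempty 𝒳 ∧ Nonempty 𝒴 := nonempty_prod.1 <| by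
    by_contra h
    simp [not_nonempty_iff.1 h] at hPXY1
  obtain ⟨Q, hQ0, hQ1, hPXQ⟩ := exists_condKernel PXY hPXY0 PX hPX
  obtain ⟨m, w, f, hm, hw, hws, hrep⟩ := exists_deterministic_decomposition Q hQ0 1 hQ1
  have hsupp : #(posSupport Q) ≤ Fintype.card 𝒳 * Fintype.card 𝒴 :=
    (card_filter_le _ _).trans (by simp)
  refine ⟨m, w, fun p => f p.2 p.1, ?_, hw, hws, fun x y => ?_⟩
  · rw [Nat.mul_sub_one]
    omega
  · rw [← mul_sum, hrep, hPXQ]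
end

section
/- In the two-dimensional dynamical source construction, the sequence (Z_n)_{n≥1} is i.i.d. with common distribution P_Z, and for every n ≥ 1 the random variable Z_n is statistically independent of the random vector (X_1, …, X_n). -/
open MeasureTheory ProbabilityTheory Filter

/-- The left endpoint of the `j`-th partition interval: the cumulative mass of the indices
preceding `j`.  The `j`-th open interval of the partition is `(cum p j, cum p j + p j)`. -/
noncomputable def cum {m : ℕ} (p : Fin m → ℝ) (j : Fin m) : ℝ :=
  ∑ j' ∈ Finset.univ.filter (fun j' => j' < j), p j'

/-!
`Φ (n + 1) = T1 (Φ n)` and `Z n` is the cell of `Φ n`, so the `Z n` are the digits of `Φ 0` in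
the expansion of `(0,1)` by the partition with masses `PZ`. Since `T1` maps each cell affinely
onto `(0,1)`, if `Φ n` is uniform and independent of a random variable `W`, then `Z n` has law
`PZ` and is independent of `W`, and `Φ (n + 1)` is uniform and independent of `(W, Z n)`.
By induction, starting from `W = Θ 0`, the digit `Z n` is independent of
`(Θ 0, Z 0, …, Z (n-1))`; this gives the i.i.d. claim. On the other side, `Θ (n + 1)` is a.s. a
measurable function of `(Θ n, Z n)` because `T0` is affine on each cell, so `(X 0, …, X n)` is
a.s. a measurable function of `(Θ 0, Z 0, …, Z (n-1))`, hence independent of `Z n`.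
-/

open Set

namespace DynamicalSource

section Cells

variable {m : ℕ} {p : Fin m → ℝ}

def cell (p : Fin m → ℝ) (j : Fin m) : Set ℝ := Ioo (cum p j) (cum p j + p j)

lemma measurableSet_cell (p : Fin m → ℝ) (j : Fin m) : MeasurableSet (cell p j) :=
  measurableSet_Ioo

lemma cum_add_self (p : Fin m → ℝ) (j : Fin m) : cum p j + p j = ∑ i ∈ Finset.Iic j, p i := by
  rw [cum, Finset.filter_gt_eq_Iio, ← Finset.Iio_insert, Finset.sum_insert Finset.notMem_Iio_self,
    add_comm]

lemma cum_add_le_cum (hp : ∀ j, 0 ≤ p j) {j j' : Fin m} (h : j < j') :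
    cum p j + p j ≤ cum p j' := by
  rw [cum_add_self, cum, Finset.filter_gt_eq_Iio]
  exact Finset.sum_le_sum_of_subset_of_nonneg
    (fun i hi => Finset.mem_Iio.2 ((Finset.mem_Iic.1 hi).trans_lt h)) fun i _ _ => hp i

lemma pos_of_mem_cell {j : Fin m} {θ : ℝ} (h : θ ∈ cell p j) : 0 < p j := by
  have := h.1.trans h.2
  linarith

lemma eq_of_mem_cell (hp : ∀ j, 0 ≤ p j) {j j' : Fin m} {θ : ℝ} (h : θ ∈ cell p j)
    (h' : θ ∈ cell p j') : j = j' := by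
  by_contra hne
  rcases lt_or_gt_of_ne hne with hlt | hlt
  · exact (h.2.trans_le ((cum_add_le_cum hp hlt).trans h'.1.le)).false
  · exact (h'.2.trans_le ((cum_add_le_cum hp hlt).trans h.1.le)).false

lemma cell_subset_Ioo (hp : ∀ j, 0 ≤ p j) (h1 : ∑ i, p i = 1) (j : Fin m) :
    cell p j ⊆ Ioo 0 1 := fun _ hθ =>
  ⟨(Finset.sum_nonneg fun i _ => hp i).trans_lt hθ.1,
    hθ.2.trans_le <| h1 ▸ cum_add_self p j ▸
      Finset.sum_le_sum_of_subset_of_nonneg (Finset.subset_univ _) fun i _ _ => hp i⟩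

lemma exists_measurable_eqOn_cell {β : Type*} [MeasurableSpace β] [Nonempty (Fin m)]
    (hp : ∀ j, 0 ≤ p j) (g : Fin m → ℝ → β) (hg : ∀ j, Measurable (g j)) :
    ∃ f : ℝ → β, Measurable f ∧ ∀ j, EqOn f (g j) (cell p j) :=
  exists_measurable_piecewise (cell p) (measurableSet_cell p) g hg
    fun _ _ hij _ hθ => (hij (eq_of_mem_cell hp hθ.1 hθ.2)).elim

lemma volume_cell_inter_preimage (p : Fin m → ℝ) (j : Fin m) (B : Set ℝ) :
    volume (cell p j ∩ (fun φ => (φ - cum p j) / p j) ⁻¹' B)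
      = ENNReal.ofReal (p j) * volume (B ∩ Ioo 0 1) := by
  rcases le_or_gt (p j) 0 with hp | hp
  · rw [cell, Ioo_eq_empty (by linarith), empty_inter, ENNReal.ofReal_of_nonpos hp, zero_mul,
      measure_empty]
  have hcell : cell p j ∩ (fun φ => (φ - cum p j) / p j) ⁻¹' B
      = (fun φ => φ + -cum p j) ⁻¹' ((fun y => y * (p j)⁻¹) ⁻¹' (B ∩ Ioo 0 1)) := by
    ext φ
    simp only [cell, mem_inter_iff, mem_Ioo, mem_preimage, ← sub_eq_add_neg, ← div_eq_mul_inv,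
      div_pos_iff_of_pos_right hp, div_lt_one hp, sub_pos, sub_lt_iff_lt_add']
    tauto
  rw [hcell, measure_preimage_add_right, Real.volume_preimage_mul_right (inv_ne_zero hp.ne'),
    inv_inv, abs_of_pos hp]

end Cells

section Orbit

variable {α β γ : Type*}

def orbit (g : α → γ → α) (θ : α) : (n : ℕ) → (Fin n → γ) → α
  | 0, _ => θ
  | n + 1, z => g (orbit g θ n (Fin.init z)) (z (Fin.last n))

def observedPath (σ : α → β) (g : α → γ → α) (n : ℕ) (x : α × (Fin n → γ))
    (l : Fin (n + 1)) : β :=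
  σ (orbit g x.1 l fun k => x.2 (Fin.castLE (Nat.lt_succ_iff.mp l.isLt) k))

lemma measurable_orbit [MeasurableSpace α] {g : α → γ → α} (hg : ∀ j, Measurable (g · j)) :
    ∀ n (z : Fin n → γ), Measurable fun θ => orbit g θ n z
  | 0, _ => measurable_id
  | n + 1, z => (hg _).comp (measurable_orbit hg n (Fin.init z))

lemma measurable_observedPath [MeasurableSpace α] [MeasurableSpace β] [MeasurableSpace γ]
    [Countable γ] [MeasurableSingletonClass γ] {σ : α → β}
    {g : α → γ → α} (hσ : Measurable σ) (hg : ∀ j, Measurable (g · j)) (n : ℕ) :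
    Measurable (observedPath σ g n) :=
  measurable_pi_lambda _ fun _ =>
    measurable_from_prod_countable_left fun z =>
      hσ.comp (measurable_orbit hg _ fun k => z (Fin.castLE _ k))

variable {Ω : Type*} [MeasurableSpace Ω] {P : Measure Ω}

lemma ae_eq_orbit {g : α → γ → α} {Θ : ℕ → Ω → α} {Z : ℕ → Ω → γ}
    (hΘ : ∀ n, ∀ᵐ ω ∂P, Θ (n + 1) ω = g (Θ n ω) (Z n ω)) :
    ∀ n, ∀ᵐ ω ∂P, Θ n ω = orbit g (Θ 0 ω) n fun k => Z k ω
  | 0 => ae_of_all _ fun _ => rfl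
  | n + 1 => by
    filter_upwards [ae_eq_orbit hΘ n, hΘ n] with ω ih hstep
    rw [hstep, ih]
    rfl

lemma ae_eq_observedPath {σ : α → β} {g : α → γ → α} {Θ : ℕ → Ω → α} {X : ℕ → Ω → β}
    {Z : ℕ → Ω → γ} (hX : ∀ n, ∀ᵐ ω ∂P, X n ω = σ (Θ n ω))
    (hΘ : ∀ n, ∀ᵐ ω ∂P, Θ (n + 1) ω = g (Θ n ω) (Z n ω)) (n : ℕ) :
    (fun ω (l : Fin (n + 1)) => X l ω)
      =ᵐ[P] fun ω => observedPath σ g n (Θ 0 ω, fun k => Z k ω) := by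
  filter_upwards [ae_all_iff.2 hX, ae_all_iff.2 (ae_eq_orbit hΘ)] with ω hXω hΘω
  funext l
  rw [hXω, hΘω]
  rfl

end Orbit

lemma iIndepFun_of_indepFun_prefix {Ω β : Type*} [MeasurableSpace Ω] [MeasurableSpace β]
    {P : Measure Ω} [IsProbabilityMeasure P] {Z : ℕ → Ω → β}
    (h : ∀ n, IndepFun (fun ω (k : Fin n) => Z k ω) (Z n) P) : iIndepFun Z P := by
  classical
  refine iIndepFun_iff_measure_inter_preimage_eq_mul.2 fun S sets hsets => ?_
  induction S using Finset.induction_on_max with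
  | empty => simp
  | insert n S hlt ih =>
    have hS : ⋂ i ∈ S, Z i ⁻¹' sets i
        = (fun ω (k : Fin n) => Z k ω) ⁻¹' {v | ∀ k : Fin n, (k : ℕ) ∈ S → v k ∈ sets k} := by
      ext ω
      simp only [mem_iInter, mem_preimage, mem_ofPred_eq]
      exact ⟨fun hω k hk => hω k hk, fun hω i hi => hω ⟨i, hlt i hi⟩ hi⟩
    have hmeas : MeasurableSet {v : Fin n → β | ∀ k : Fin n, (k : ℕ) ∈ S → v k ∈ sets k} := by
      simp only [ofPred_forall]
      exact .iInter fun k => .iInter fun hk =>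
        measurable_pi_apply k (hsets k (Finset.mem_insert_of_mem hk))
    rw [Finset.set_biInter_insert, Finset.prod_insert fun hn => (hlt n hn).false, inter_comm, hS,
      (h n).measure_inter_preimage_eq_mul _ _ hmeas (hsets n (Finset.mem_insert_self n S)), ← hS,
      ih fun i hi => hsets i (Finset.mem_insert_of_mem hi), mul_comm]

section Digits

variable {Ω α : Type*} [MeasurableSpace Ω] [MeasurableSpace α] {P : Measure Ω} {c : ℕ}
  {PZ : Fin c → ℝ} {T1 : ℝ → ℝ}

lemma measure_preimage_eq_volume_inter {Φ : Ω → ℝ} (hΦ : HasLaw Φ (volume.restrict (Ioo 0 1)) P)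
    {S : Set ℝ} (hS : MeasurableSet S) : P (Φ ⁻¹' S) = volume (S ∩ Ioo 0 1) :=
  (hΦ.measure_eq hS).trans (Measure.restrict_apply hS)

lemma measure_eq_sum_inter_preimage_singleton {β : Type*} [Fintype β] [MeasurableSpace β]
    [MeasurableSingletonClass β] {D : Ω → β} (hD : Measurable D) (S : Set Ω) :
    P S = ∑ j, P (S ∩ D ⁻¹' {j}) := by
  have h := sum_measure_preimage_singleton (μ := P.restrict S) Finset.univ
    fun j _ => hD (measurableSet_singleton j)
  rw [Finset.coe_univ, preimage_univ, Measure.restrict_apply_univ] at h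
  rw [← h]
  exact Finset.sum_congr rfl fun j _ => by
    rw [Measure.restrict_apply (hD (measurableSet_singleton j)), inter_comm]

lemma measure_prodMk_preimage_inter_preimage {W : Ω → α} {Φ Φ' : Ω → ℝ} {D : Ω → Fin c}
    (hD : Measurable D) (hPZ0 : ∀ j, 0 ≤ PZ j) (hPZ1 : ∑ j, PZ j = 1)
    (hT1 : ∀ j, ∀ φ ∈ cell PZ j, T1 φ = (φ - cum PZ j) / PZ j)
    (hind : IndepFun W Φ P) (hlaw : HasLaw Φ (volume.restrict (Ioo 0 1)) P)
    (hDΦ : ∀ᵐ ω ∂P, Φ ω ∈ cell PZ (D ω)) (hΦ' : ∀ᵐ ω ∂P, Φ' ω = T1 (Φ ω))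
    {A : Set (α × Fin c)} (hA : MeasurableSet A) {B : Set ℝ} (hB : MeasurableSet B) :
    P ((fun ω => (W ω, D ω)) ⁻¹' A ∩ Φ' ⁻¹' B)
      = (∑ j, P (W ⁻¹' ((·, j) ⁻¹' A)) * ENNReal.ofReal (PZ j)) * volume (B ∩ Ioo 0 1) := by
  have hfibre : ∀ j, ((fun ω => (W ω, D ω)) ⁻¹' A ∩ Φ' ⁻¹' B ∩ D ⁻¹' {j} : Set Ω)
      =ᵐ[P] (W ⁻¹' ((·, j) ⁻¹' A) ∩ Φ ⁻¹' (cell PZ j ∩ (fun φ => (φ - cum PZ j) / PZ j) ⁻¹' B) :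
        Set Ω) := by
    intro j
    filter_upwards [hDΦ, hΦ'] with ω hω hω'
    refine propext ⟨?_, ?_⟩
    · rintro ⟨⟨hA, hB⟩, rfl : D ω = j⟩
      exact ⟨hA, hω, by rwa [mem_preimage, ← hT1 _ _ hω, ← hω']⟩
    · rintro ⟨hA, hj, hB⟩
      obtain rfl := eq_of_mem_cell hPZ0 hω hj
      exact ⟨⟨hA, by rwa [mem_preimage, hω', hT1 _ _ hω]⟩, rfl⟩
  have hcell : ∀ j, MeasurableSet (cell PZ j ∩ (fun φ => (φ - cum PZ j) / PZ j) ⁻¹' B) :=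
    fun j => (measurableSet_cell PZ j).inter
      ((by fun_prop : Measurable fun φ => (φ - cum PZ j) / PZ j) hB)
  rw [measure_eq_sum_inter_preimage_singleton hD, Finset.sum_mul]
  refine Finset.sum_congr rfl fun j _ => ?_
  rw [measure_congr (hfibre j), hind.measure_inter_preimage_eq_mul _ _
    (measurable_prodMk_right hA) (hcell j), measure_preimage_eq_volume_inter hlaw (hcell j),
    inter_eq_left.2 (inter_subset_left.trans (cell_subset_Ioo hPZ0 hPZ1 j)),
    volume_cell_inter_preimage, mul_assoc]

lemma indepFun_prodMk_and_hasLaw {W : Ω → α} {Φ Φ' : Ω → ℝ} {D : Ω → Fin c}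
    [IsProbabilityMeasure P] (hΦ'm : Measurable Φ') (hD : Measurable D)
    (hPZ0 : ∀ j, 0 ≤ PZ j) (hPZ1 : ∑ j, PZ j = 1)
    (hT1 : ∀ j, ∀ φ ∈ cell PZ j, T1 φ = (φ - cum PZ j) / PZ j)
    (hind : IndepFun W Φ P) (hlaw : HasLaw Φ (volume.restrict (Ioo 0 1)) P)
    (hDΦ : ∀ᵐ ω ∂P, Φ ω ∈ cell PZ (D ω)) (hΦ' : ∀ᵐ ω ∂P, Φ' ω = T1 (Φ ω)) :
    IndepFun (fun ω => (W ω, D ω)) Φ' P ∧ HasLaw Φ' (volume.restrict (Ioo 0 1)) P := by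
  have key {A : Set (α × Fin c)} {B : Set ℝ} (hA : MeasurableSet A) (hB : MeasurableSet B) :=
    measure_prodMk_preimage_inter_preimage hD hPZ0 hPZ1 hT1 hind hlaw hDΦ hΦ' hA hB
  have hlaw' : ∀ B, MeasurableSet B → P (Φ' ⁻¹' B) = volume (B ∩ Ioo 0 1) := fun B hB => by
    simpa [← ENNReal.ofReal_sum_of_nonneg fun j _ => hPZ0 j, hPZ1] using key MeasurableSet.univ hB
  refine ⟨indepFun_iff_measure_inter_preimage_eq_mul.2 fun A B hA hB => ?_,
    ⟨hΦ'm.aemeasurable, Measure.ext fun B hB => ?_⟩⟩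
  · have hA1 := key hA MeasurableSet.univ
    rw [preimage_univ, inter_univ, univ_inter, Real.volume_Ioo, sub_zero, ENNReal.ofReal_one,
      mul_one] at hA1
    rw [key hA hB, hA1, hlaw' B hB]
  · rw [Measure.map_apply hΦ'm hB, hlaw' B hB, Measure.restrict_apply hB]

lemma indepFun_of_mem_cell [Nonempty (Fin c)] {W : Ω → α} {Φ : Ω → ℝ} {D : Ω → Fin c}
    (hPZ0 : ∀ j, 0 ≤ PZ j) (hind : IndepFun W Φ P) (hDΦ : ∀ᵐ ω ∂P, Φ ω ∈ cell PZ (D ω)) :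
    IndepFun W D P := by
  obtain ⟨σ, hσm, hσ⟩ := exists_measurable_eqOn_cell hPZ0 (fun j _ => j) fun _ => measurable_const
  refine (hind.comp measurable_id hσm).congr (ae_eq_refl _) ?_
  filter_upwards [hDΦ] with ω hω using hσ _ hω

lemma measure_eq_of_mem_cell {Φ : Ω → ℝ} {D : Ω → Fin c} (hPZ0 : ∀ j, 0 ≤ PZ j)
    (hPZ1 : ∑ j, PZ j = 1) (hlaw : HasLaw Φ (volume.restrict (Ioo 0 1)) P)
    (hDΦ : ∀ᵐ ω ∂P, Φ ω ∈ cell PZ (D ω)) (j : Fin c) :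
    P {ω | D ω = j} = ENNReal.ofReal (PZ j) := by
  have hD : ({ω | D ω = j} : Set Ω) =ᵐ[P] Φ ⁻¹' cell PZ j := by
    filter_upwards [hDΦ] with ω hω
    exact propext ⟨fun h => h ▸ hω, eq_of_mem_cell hPZ0 hω⟩
  rw [measure_congr hD, measure_preimage_eq_volume_inter hlaw (measurableSet_cell PZ j),
    inter_eq_left.2 (cell_subset_Ioo hPZ0 hPZ1 j), cell, Real.volume_Ioo, add_sub_cancel_left]

lemma indepFun_prefix_and_hasLaw [IsProbabilityMeasure P] {U : Ω → α} {Φ : ℕ → Ω → ℝ}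
    {Z : ℕ → Ω → Fin c} (hΦm : ∀ n, Measurable (Φ n)) (hZm : ∀ n, Measurable (Z n))
    (hPZ0 : ∀ j, 0 ≤ PZ j) (hPZ1 : ∑ j, PZ j = 1)
    (hT1 : ∀ j, ∀ φ ∈ cell PZ j, T1 φ = (φ - cum PZ j) / PZ j)
    (hZΦ : ∀ n, ∀ᵐ ω ∂P, Φ n ω ∈ cell PZ (Z n ω))
    (hΦrec : ∀ n, ∀ᵐ ω ∂P, Φ (n + 1) ω = T1 (Φ n ω))
    (h0 : IndepFun U (Φ 0) P) (hlaw0 : HasLaw (Φ 0) (volume.restrict (Ioo 0 1)) P) :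
    ∀ N, IndepFun (fun ω => (U ω, fun k : Fin N => Z k ω)) (Φ N) P
      ∧ HasLaw (Φ N) (volume.restrict (Ioo 0 1)) P
  | 0 => by
    refine ⟨?_, hlaw0⟩
    convert h0.comp (measurable_id.prodMk (measurable_const (a := Fin.elim0))) measurable_id
      using 1
    · exact funext fun ω => Prod.ext rfl (Subsingleton.elim _ _)
    · rfl
  | N + 1 => by
    obtain ⟨hind, hlaw⟩ :=
      indepFun_prefix_and_hasLaw hΦm hZm hPZ0 hPZ1 hT1 hZΦ hΦrec h0 hlaw0 N
    obtain ⟨hind', hlaw'⟩ :=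
      indepFun_prodMk_and_hasLaw (hΦm (N + 1)) (hZm N) hPZ0 hPZ1 hT1 hind hlaw (hZΦ N) (hΦrec N)
    refine ⟨?_, hlaw'⟩
    have hsnoc : Measurable fun x : (α × (Fin N → Fin c)) × Fin c =>
        (x.1.1, (Fin.snoc x.1.2 x.2 : Fin (N + 1) → Fin c)) :=
      measurable_from_prod_countable_left fun _ => by fun_prop
    convert hind'.comp hsnoc measurable_id using 1
    · exact funext fun ω => Prod.ext rfl (Fin.snoc_init_self _).symm
    · rfl

lemma indepFun_and_hasLaw_of_map_eq [IsProbabilityMeasure P] {Θ Φ : Ω → ℝ}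
    (hΘ : Measurable Θ) (hΦ : Measurable Φ)
    (h : P.map (fun ω => (Θ ω, Φ ω)) = volume.restrict (Ioo (0 : ℝ) 1 ×ˢ Ioo (0 : ℝ) 1)) :
    IndepFun Θ Φ P ∧ HasLaw Φ (volume.restrict (Ioo 0 1)) P := by
  have hpair : HasLaw (fun ω => (Θ ω, Φ ω))
      ((volume.restrict (Ioo (0 : ℝ) 1)).prod (volume.restrict (Ioo 0 1))) P :=
    ⟨(hΘ.prodMk hΦ).aemeasurable, by rw [h, Measure.volume_eq_prod, Measure.prod_restrict]⟩
  have hΘlaw : HasLaw Θ (volume.restrict (Ioo 0 1)) P :=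
    (⟨measurable_fst.aemeasurable, by simp⟩ : HasLaw Prod.fst _ _).comp hpair
  have hΦlaw : HasLaw Φ (volume.restrict (Ioo 0 1)) P :=
    (⟨measurable_snd.aemeasurable, by simp⟩ : HasLaw Prod.snd _ _).comp hpair
  exact ⟨(indepFun_iff_hasLaw_prodMk_prod hΘlaw hΦlaw).2 hpair, hΦlaw⟩

end Digits

lemma exists_measurable_step {Ω γ : Type*} [MeasurableSpace Ω] {P : Measure Ω} {a : ℕ}
    [Nonempty (Fin a)] {PX : Fin a → ℝ} (hPX0 : ∀ i, 0 ≤ PX i) {T : ℝ → Fin a → γ → ℝ}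
    (hT : ∀ i j, ∃ F : ℝ → ℝ, Measurable F ∧ EqOn (T · i j) F (cell PX i))
    {Θ : ℕ → Ω → ℝ} {X : ℕ → Ω → Fin a} {Z : ℕ → Ω → γ}
    (hXΘ : ∀ n, ∀ᵐ ω ∂P, Θ n ω ∈ cell PX (X n ω))
    (hΘ : ∀ n, ∀ᵐ ω ∂P, Θ (n + 1) ω = T (Θ n ω) (X n ω) (Z n ω)) :
    ∃ G : ℝ → γ → ℝ, (∀ j, Measurable (G · j))
      ∧ ∀ n, ∀ᵐ ω ∂P, Θ (n + 1) ω = G (Θ n ω) (Z n ω) := by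
  choose F hFm hF using hT
  obtain ⟨G, hGm, hG⟩ := exists_measurable_eqOn_cell hPX0 (fun i θ j => F i j θ)
    fun i => measurable_pi_lambda _ fun j => hFm i j
  refine ⟨G, fun j => (measurable_pi_apply j).comp hGm, fun n => ?_⟩
  filter_upwards [hΘ n, hXΘ n] with ω hstep hcell
  rw [hstep, hG _ hcell]
  exact hF _ _ hcell

end DynamicalSource

open DynamicalSource in
/-- Indices are 0-based: `Θ 0` is the paper's `Θ₁`, etc. -/
theorem stmt_2_general
    {Ω : Type*} [MeasurableSpace Ω] (P : Measure Ω) [IsProbabilityMeasure P]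
    {a b c : ℕ}
    (PXY : Fin a × Fin b → ℝ)
    (hPXY0 : ∀ q, 0 ≤ PXY q)
    (PX : Fin a → ℝ) (hPX : ∀ i, PX i = ∑ k, PXY (i, k))
    (PY : Fin b → ℝ)
    (PZ : Fin c → ℝ) (hPZ0 : ∀ j, 0 ≤ PZ j) (hPZ1 : ∑ j, PZ j = 1)
    (ξ : Fin a × Fin c → Fin b)
    (T0 : ℝ → Fin b → ℝ)
    (hT0 : ∀ (k : Fin b) (i : Fin a), 0 < PX i →
      ∀ θ ∈ Set.Icc (cum PX i) (cum PX i + PX i),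
        T0 θ k = (∑ i' ∈ Finset.univ.filter (fun i' => i' < i), PXY (i', k)) / PY k
          + (θ - cum PX i) * (PXY (i, k) / (PY k * PX i)))
    (T1 : ℝ → ℝ)
    (hT1 : ∀ j : Fin c, ∀ φ ∈ Set.Ioo (cum PZ j) (cum PZ j + PZ j),
      T1 φ = (φ - cum PZ j) / PZ j)
    (Θ Φ : ℕ → Ω → ℝ) (X : ℕ → Ω → Fin a) (Z : ℕ → Ω → Fin c) (Y : ℕ → Ω → Fin b)
    (hΘm : ∀ n, Measurable (Θ n)) (hΦm : ∀ n, Measurable (Φ n))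
    (hZm : ∀ n, Measurable (Z n))
    (hinit : Measure.map (fun ω => (Θ 0 ω, Φ 0 ω)) P
      = volume.restrict (Set.Ioo (0:ℝ) 1 ×ˢ Set.Ioo (0:ℝ) 1))
    (hXdef : ∀ n, ∀ᵐ ω ∂P, Θ n ω ∈ Set.Ioo (cum PX (X n ω)) (cum PX (X n ω) + PX (X n ω)))
    (hZdef : ∀ n, ∀ᵐ ω ∂P, Φ n ω ∈ Set.Ioo (cum PZ (Z n ω)) (cum PZ (Z n ω) + PZ (Z n ω)))
    (hYdef : ∀ n ω, Y n ω = ξ (X n ω, Z n ω))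
    (hΘrec : ∀ n, ∀ᵐ ω ∂P, Θ (n + 1) ω = T0 (Θ n ω) (Y n ω))
    (hΦrec : ∀ n, ∀ᵐ ω ∂P, Φ (n + 1) ω = T1 (Φ n ω))
    :
    (iIndepFun Z P ∧
      ∀ n j, P {ω | Z n ω = j} = ENNReal.ofReal (PZ j)) ∧
    (∀ n : ℕ, IndepFun (Z n) (fun ω (l : Fin (n + 1)) => X l.val ω) P) := by
  have : Nonempty Ω := nonempty_of_isProbabilityMeasure P
  have : Nonempty (Fin a) := ⟨X 0 (Classical.arbitrary Ω)⟩
  have : Nonempty (Fin c) := ⟨Z 0 (Classical.arbitrary Ω)⟩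
  have hPX0 : ∀ i, 0 ≤ PX i := fun i => hPX i ▸ Finset.sum_nonneg fun k _ => hPXY0 _
  obtain ⟨hΘΦ, hΦlaw⟩ := indepFun_and_hasLaw_of_map_eq (hΘm 0) (hΦm 0) hinit
  have hdigits := indepFun_prefix_and_hasLaw hΦm hZm hPZ0 hPZ1 hT1 hZdef hΦrec hΘΦ hΦlaw
  have hZ : ∀ n, IndepFun (fun ω => (Θ 0 ω, fun k : Fin n => Z k ω)) (Z n) P := fun n =>
    indepFun_of_mem_cell hPZ0 (hdigits n).1 (hZdef n)
  obtain ⟨G, hGm, hΘG⟩ := exists_measurable_step hPX0 (T := fun θ i j => T0 θ (ξ (i, j)))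
    (fun i j => ⟨_, by fun_prop,
      fun θ hθ => hT0 _ i (pos_of_mem_cell hθ) θ (Ioo_subset_Icc_self hθ)⟩)
    hXdef fun n => (hΘrec n).mono fun ω h => by rw [h, hYdef]
  obtain ⟨σ, hσm, hσ⟩ := exists_measurable_eqOn_cell hPX0 (fun i _ => i) fun _ => measurable_const
  refine ⟨⟨iIndepFun_of_indepFun_prefix fun n => (hZ n).comp measurable_snd measurable_id,
    fun n => measure_eq_of_mem_cell hPZ0 hPZ1 (hdigits n).2 (hZdef n)⟩, fun n => ?_⟩
  have hXpath := ae_eq_observedPath (fun m => (hXdef m).mono fun ω h => (hσ _ h).symm) hΘG n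
  exact ((hZ n).symm.comp measurable_id (measurable_observedPath hσm hGm n)).congr
    (ae_eq_refl _) hXpath.symm

/-- Lemma 3(a) of the paper, for the two-dimensional dynamical source construction driven by a
uniform initial state on the open unit square: the sequence `Z` is i.i.d. with common
distribution `PZ`, and for every `n` the variable `Z n` is independent of `(X 0, …, X n)`.
(Indices are 0-based: `Θ 0` is the paper's `Θ₁`, etc.) -/
theorem stmt_2
    {Ω : Type*} [MeasurableSpace Ω] (P : Measure Ω) [IsProbabilityMeasure P]
    {a b c : ℕ}
    (PXY : Fin a × Fin b → ℝ)
    (hPXY0 : ∀ q, 0 ≤ PXY q) (hPXY1 : ∑ q : Fin a × Fin b, PXY q = 1)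
    (PX : Fin a → ℝ) (hPX : ∀ i, PX i = ∑ k, PXY (i, k))
    (PY : Fin b → ℝ) (hPY : ∀ k, PY k = ∑ i, PXY (i, k))
    (PZ : Fin c → ℝ) (hPZ0 : ∀ j, 0 ≤ PZ j) (hPZ1 : ∑ j, PZ j = 1)
    (ξ : Fin a × Fin c → Fin b)
    (hξ : ∀ i k, ∑ j ∈ Finset.univ.filter (fun j => ξ (i, j) = k), PX i * PZ j = PXY (i, k))
    (T0 : ℝ → Fin b → ℝ)
    (hT0 : ∀ (k : Fin b) (i : Fin a), 0 < PX i →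
      ∀ θ ∈ Set.Icc (cum PX i) (cum PX i + PX i),
        T0 θ k = (∑ i' ∈ Finset.univ.filter (fun i' => i' < i), PXY (i', k)) / PY k
          + (θ - cum PX i) * (PXY (i, k) / (PY k * PX i)))
    (T1 : ℝ → ℝ)
    (hT1 : ∀ j : Fin c, ∀ φ ∈ Set.Ioo (cum PZ j) (cum PZ j + PZ j),
      T1 φ = (φ - cum PZ j) / PZ j)
    (Θ Φ : ℕ → Ω → ℝ) (X : ℕ → Ω → Fin a) (Z : ℕ → Ω → Fin c) (Y : ℕ → Ω → Fin b)
    (hΘm : ∀ n, Measurable (Θ n)) (hΦm : ∀ n, Measurable (Φ n))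
    (hXm : ∀ n, Measurable (X n)) (hZm : ∀ n, Measurable (Z n))
    (hinit : Measure.map (fun ω => (Θ 0 ω, Φ 0 ω)) P
      = volume.restrict (Set.Ioo (0:ℝ) 1 ×ˢ Set.Ioo (0:ℝ) 1))
    (hXdef : ∀ n, ∀ᵐ ω ∂P, Θ n ω ∈ Set.Ioo (cum PX (X n ω)) (cum PX (X n ω) + PX (X n ω)))
    (hZdef : ∀ n, ∀ᵐ ω ∂P, Φ n ω ∈ Set.Ioo (cum PZ (Z n ω)) (cum PZ (Z n ω) + PZ (Z n ω)))
    (hYdef : ∀ n ω, Y n ω = ξ (X n ω, Z n ω))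
    (hΘrec : ∀ n, ∀ᵐ ω ∂P, Θ (n + 1) ω = T0 (Θ n ω) (Y n ω))
    (hΦrec : ∀ n, ∀ᵐ ω ∂P, Φ (n + 1) ω = T1 (Φ n ω))
    :
    (iIndepFun Z P ∧
      ∀ n j, P {ω | Z n ω = j} = ENNReal.ofReal (PZ j)) ∧
    (∀ n : ℕ, IndepFun (Z n) (fun ω (l : Fin (n + 1)) => X l.val ω) P) :=
  stmt_2_general P PXY hPXY0 PX hPX PY PZ hPZ0 hPZ1 ξ T0 hT0 T1 hT1 Θ Φ X Z Y hΘm hΦm hZm hinit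
    hXdef hZdef hYdef hΘrec hΦrec
end

section
/- In the two-dimensional dynamical source construction, for every n ≥ 1 the pair (X_n, Y_n) has joint distribution P_XY, and X_n is statistically independent of the random vector (Y_1, …, Y_{n−1}). -/
open MeasureTheory ProbabilityTheory Filter

open Set

section MeasureLemmas

variable {Ω α β : Type*} [MeasurableSpace Ω] [MeasurableSpace α] [MeasurableSpace β]

lemma restrict_preimage_finset_eq_sum [MeasurableSingletonClass β] (μ : Measure Ω) {V : Ω → β}
    (hV : Measurable V) (s : Finset β) :
    μ.restrict (V ⁻¹' s) = ∑ y ∈ s, μ.restrict (V ⁻¹' {y}) := by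
  ext t ht
  have hy : ∀ y, μ.restrict (V ⁻¹' {y}) t = μ.restrict t (V ⁻¹' {y}) := fun y => by
    rw [Measure.restrict_apply ht, Measure.restrict_apply (hV (measurableSet_singleton y)),
      inter_comm]
  rw [Measure.finsetSum_apply, Finset.sum_congr rfl fun y _ => hy y,
    sum_measure_preimage_singleton s fun y _ => hV (measurableSet_singleton y),
    Measure.restrict_apply ht, Measure.restrict_apply (hV s.measurableSet), inter_comm]

lemma map_restrict_of_ae_eq_preimage {μ : Measure Ω} {G : Ω → α} (hG : Measurable G)
    {C : Set Ω} {S : Set α} (hS : MeasurableSet S) (hC : C =ᵐ[μ] G ⁻¹' S) :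
    (μ.restrict C).map G = (μ.map G).restrict S := by
  rw [Measure.restrict_congr_set hC, Measure.restrict_map hG hS]

lemma map_eq_smul_of_map_restrict_preimage_singleton [Fintype β] [MeasurableSingletonClass β]
    {μ : Measure Ω} {V : Ω → β} (hV : Measurable V) {G : Ω → α} (hG : Measurable G)
    {ν : Measure α} (h : ∀ y, (μ.restrict (V ⁻¹' {y})).map G = μ (V ⁻¹' {y}) • ν) :
    μ.map G = μ univ • ν := by
  have hμ : μ = ∑ y, μ.restrict (V ⁻¹' {y}) := by
    rw [← restrict_preimage_finset_eq_sum μ hV, Finset.coe_univ, preimage_univ,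
      Measure.restrict_univ]
  conv_lhs => rw [hμ]
  rw [Measure.map_finset_sum hG.aemeasurable, Finset.sum_congr rfl fun y _ => h y,
    ← Finset.sum_smul, sum_measure_preimage_singleton _ fun y _ => hV (measurableSet_singleton y),
    Finset.coe_univ, preimage_univ]

lemma indepFun_of_measure_inter_preimage_singleton [Countable α] [Countable β]
    [MeasurableSingletonClass α] [MeasurableSingletonClass β] {μ : Measure Ω} [IsFiniteMeasure μ]
    {f : Ω → α} {g : Ω → β} (hf : Measurable f) (hg : Measurable g)
    (h : ∀ x y, μ (f ⁻¹' {x} ∩ g ⁻¹' {y}) = μ (f ⁻¹' {x}) * μ (g ⁻¹' {y})) :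
    IndepFun f g μ := by
  rw [indepFun_iff_map_prod_eq_prod_map_map hf.aemeasurable hg.aemeasurable]
  refine Measure.ext_of_singleton fun ⟨x, y⟩ => ?_
  rw [← singleton_prod_singleton, Measure.prod_prod,
    Measure.map_apply (hf.prodMk hg) ((measurableSet_singleton x).prod (measurableSet_singleton y)),
    mk_preimage_prod, Measure.map_apply hf (measurableSet_singleton x),
    Measure.map_apply hg (measurableSet_singleton y), h]

end MeasureLemmas

section Partition

variable {m : ℕ} {p : Fin m → ℝ}

def partitionIoo (p : Fin m → ℝ) (j : Fin m) : Set ℝ := Ioo (cum p j) (cum p j + p j)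

lemma measurableSet_partitionIoo (p : Fin m → ℝ) (i : Fin m) :
    MeasurableSet (partitionIoo p i) :=
  measurableSet_Ioo

lemma cum_eq_sum_Iio (p : Fin m → ℝ) (i : Fin m) : cum p i = ∑ j ∈ Finset.Iio i, p j := by
  rw [cum, Finset.filter_gt_eq_Iio]

lemma cum_add_self (p : Fin m → ℝ) (i : Fin m) : cum p i + p i = ∑ j ∈ Finset.Iic i, p j := by
  rw [cum_eq_sum_Iio, ← Finset.Iio_insert, Finset.sum_insert Finset.notMem_Iio_self, add_comm]

lemma cum_nonneg (hp : ∀ j, 0 ≤ p j) (i : Fin m) : 0 ≤ cum p i :=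
  Finset.sum_nonneg fun j _ => hp j

lemma cum_add_self_le_cum (hp : ∀ j, 0 ≤ p j) {i i' : Fin m} (h : i < i') :
    cum p i + p i ≤ cum p i' := by
  rw [cum_add_self, cum_eq_sum_Iio]
  exact Finset.sum_le_sum_of_subset_of_nonneg
    (fun j hj => Finset.mem_Iio.2 ((Finset.mem_Iic.1 hj).trans_lt h)) fun j _ _ => hp j

lemma cum_add_self_le_one (hp : ∀ j, 0 ≤ p j) (hp1 : ∑ j, p j = 1) (i : Fin m) :
    cum p i + p i ≤ 1 := by
  rw [cum_add_self, ← hp1]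
  exact Finset.sum_le_sum_of_subset_of_nonneg (Finset.subset_univ _) fun j _ _ => hp j

lemma partitionIoo_subset_Ioo (hp : ∀ j, 0 ≤ p j) (hp1 : ∑ j, p j = 1) (i : Fin m) :
    partitionIoo p i ⊆ Ioo 0 1 := fun _ hx =>
  ⟨(cum_nonneg hp i).trans_lt hx.1, hx.2.trans_le (cum_add_self_le_one hp hp1 i)⟩

lemma pos_of_mem_partitionIoo {x : ℝ} {i : Fin m} (hx : x ∈ partitionIoo p i) : 0 < p i := by
  linarith [hx.1, hx.2]

lemma eq_of_mem_partitionIoo (hp : ∀ j, 0 ≤ p j) {x : ℝ} {i i' : Fin m}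
    (hx : x ∈ partitionIoo p i) (hx' : x ∈ partitionIoo p i') : i = i' := by
  by_contra hne
  rcases lt_or_gt_of_ne hne with h | h
  · linarith [cum_add_self_le_cum hp h, hx.2, hx'.1]
  · linarith [cum_add_self_le_cum hp h, hx'.2, hx.1]

lemma pairwise_disjoint_partitionIoo (hp : ∀ j, 0 ≤ p j) :
    Pairwise (Function.onFun Disjoint (partitionIoo p)) := fun _ _ hne =>
  disjoint_left.2 fun _ hx hx' => hne (eq_of_mem_partitionIoo hp hx hx')

lemma volume_partitionIoo (p : Fin m → ℝ) (i : Fin m) :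
    volume (partitionIoo p i) = ENNReal.ofReal (p i) := by
  rw [partitionIoo, Real.volume_Ioo, add_sub_cancel_left]

lemma sum_volume_restrict_partitionIoo (hp : ∀ j, 0 ≤ p j) (hp1 : ∑ j, p j = 1) :
    ∑ i, volume.restrict (partitionIoo p i) = volume.restrict (Ioo (0 : ℝ) 1) := by
  have hmeas := measurableSet_partitionIoo p
  have hvol : volume (⋃ i, partitionIoo p i) = volume (Ioo (0 : ℝ) 1) := by
    rw [measure_iUnion (pairwise_disjoint_partitionIoo hp) hmeas, tsum_fintype]
    simp_rw [volume_partitionIoo]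
    rw [← ENNReal.ofReal_sum_of_nonneg fun i _ => hp i, hp1, Real.volume_Ioo, sub_zero]
  have hae : (⋃ i, partitionIoo p i) =ᵐ[volume] Ioo (0 : ℝ) 1 :=
    ae_eq_of_subset_of_measure_ge (iUnion_subset (partitionIoo_subset_Ioo hp hp1)) hvol.ge
      (MeasurableSet.iUnion hmeas).nullMeasurableSet (by simp)
  rw [← Measure.restrict_congr_set hae,
    Measure.restrict_iUnion (pairwise_disjoint_partitionIoo hp) hmeas, Measure.sum_fintype]

lemma sum_volume_restrict_partitionIoo_prod (hp : ∀ j, 0 ≤ p j) (hp1 : ∑ j, p j = 1)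
    (t : Set ℝ) :
    ∑ i, volume.restrict (partitionIoo p i ×ˢ t) = volume.restrict (Ioo (0 : ℝ) 1 ×ˢ t) := by
  simp_rw [Measure.volume_eq_prod, ← Measure.prod_restrict, ← Measure.sum_fintype,
    ← Measure.prod_sum_left, Measure.sum_fintype, sum_volume_restrict_partitionIoo hp hp1]

lemma preimage_singleton_ae_eq_of_mem_partitionIoo {Ω : Type*} [MeasurableSpace Ω]
    {μ : Measure Ω} (hp : ∀ j, 0 ≤ p j) {f : Ω → Fin m} {g : Ω → ℝ}
    (h : ∀ᵐ ω ∂μ, g ω ∈ partitionIoo p (f ω)) (i : Fin m) :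
    f ⁻¹' {i} =ᵐ[μ] g ⁻¹' partitionIoo p i := by
  filter_upwards [h] with ω hω
  exact propext ⟨fun hi => (hi : f ω = i) ▸ hω, fun hi => eq_of_mem_partitionIoo hp hω hi⟩

end Partition

noncomputable def affineIoo (α p γ s : ℝ) (x : ℝ) : ℝ := γ + (x - α) * (s / p)

lemma measurable_affineIoo (α p γ s : ℝ) : Measurable (affineIoo α p γ s) := by
  unfold affineIoo; fun_prop

lemma map_affineIoo_volume_restrict {α p γ s : ℝ} (hp : 0 < p) (hs : 0 < s) :
    (volume.restrict (Ioo α (α + p))).map (affineIoo α p γ s)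
      = ENNReal.ofReal (p / s) • volume.restrict (Ioo γ (γ + s)) := by
  have hr : 0 < s / p := div_pos hs hp
  have hcomp : affineIoo α p γ s = (fun x => (γ - α * (s / p)) + x) ∘ (fun x => s / p * x) := by
    funext x; simp only [affineIoo, Function.comp_apply]; ring
  have hmap : volume.map (affineIoo α p γ s) = ENNReal.ofReal (p / s) • volume := by
    rw [hcomp, ← Measure.map_map (by fun_prop) (by fun_prop), Real.map_volume_mul_left hr.ne',
      Measure.map_smul, map_add_left_eq_self, abs_of_pos (inv_pos.2 hr), inv_div]
  have hpre : affineIoo α p γ s ⁻¹' Ioo γ (γ + s) = Ioo α (α + p) := by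
    ext x
    have hs' : s = p * (s / p) := (mul_div_cancel₀ s hp.ne').symm
    simp only [mem_preimage, mem_Ioo, affineIoo, lt_add_iff_pos_right, add_lt_add_iff_left,
      mul_pos_iff_of_pos_right hr, sub_pos]
    constructor <;> rintro ⟨h1, h2⟩ <;> refine ⟨h1, ?_⟩ <;> nlinarith
  rw [← hpre, ← Measure.restrict_map (measurable_affineIoo α p γ s) measurableSet_Ioo, hmap,
    Measure.restrict_smul]

lemma map_prodMap_affineIoo_volume_restrict {α p γ s α' p' γ' s' : ℝ} (hp : 0 < p) (hs : 0 < s)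
    (hp' : 0 < p') (hs' : 0 < s') :
    (volume.restrict (Ioo α (α + p) ×ˢ Ioo α' (α' + p'))).map
        (Prod.map (affineIoo α p γ s) (affineIoo α' p' γ' s'))
      = ENNReal.ofReal (p / s * (p' / s')) •
          volume.restrict (Ioo γ (γ + s) ×ˢ Ioo γ' (γ' + s')) := by
  rw [Measure.volume_eq_prod, ← Measure.prod_restrict,
    ← Measure.map_prod_map _ _ (measurable_affineIoo _ _ _ _) (measurable_affineIoo _ _ _ _),
    map_affineIoo_volume_restrict hp hs, map_affineIoo_volume_restrict hp' hs',
    Measure.prod_smul_left, Measure.prod_smul_right, smul_smul, Measure.prod_restrict,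
    ← ENNReal.ofReal_mul (div_nonneg hp.le hs.le)]

noncomputable def uniformSquare : Measure (ℝ × ℝ) := volume.restrict (Ioo 0 1 ×ˢ Ioo 0 1)

lemma uniformSquare_prod (s t : Set ℝ) :
    uniformSquare (s ×ˢ t) = volume (s ∩ Ioo 0 1) * volume (t ∩ Ioo 0 1) := by
  rw [uniformSquare, Measure.restrict_apply' (measurableSet_Ioo.prod measurableSet_Ioo),
    prod_inter_prod, Measure.volume_eq_prod, Measure.prod_prod]

lemma uniformSquare_univ : uniformSquare univ = 1 := by
  rw [← univ_prod_univ, uniformSquare_prod]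
  simp

lemma uniformSquare_restrict {S : Set (ℝ × ℝ)} (hS : MeasurableSet S)
    (hsub : S ⊆ Ioo 0 1 ×ˢ Ioo 0 1) : uniformSquare.restrict S = volume.restrict S := by
  rw [uniformSquare, Measure.restrict_restrict hS, inter_eq_left.2 hsub]

section CellMap

variable {a b c : ℕ} {PXY : Fin a × Fin b → ℝ} {PX : Fin a → ℝ} {PY : Fin b → ℝ} {PZ : Fin c → ℝ}

noncomputable def condPX (PXY : Fin a × Fin b → ℝ) (PY : Fin b → ℝ) (k : Fin b) (i : Fin a) : ℝ :=
  PXY (i, k) / PY k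

/-- One step of the dynamics on the cell `Π⁰_i × Π¹_j` when the output is `k`: it maps the cell
affinely onto `(F_{X|Y}(i-1|k), F_{X|Y}(i|k)) × (0,1)`. -/
noncomputable def cellMap (PXY : Fin a × Fin b → ℝ) (PX : Fin a → ℝ) (PY : Fin b → ℝ)
    (PZ : Fin c → ℝ) (i : Fin a) (j : Fin c) (k : Fin b) : ℝ × ℝ → ℝ × ℝ :=
  Prod.map (affineIoo (cum PX i) (PX i) (cum (condPX PXY PY k) i) (condPX PXY PY k i))
    (affineIoo (cum PZ j) (PZ j) 0 1)

lemma measurable_cellMap (PXY : Fin a × Fin b → ℝ) (PX : Fin a → ℝ) (PY : Fin b → ℝ)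
    (PZ : Fin c → ℝ) (i : Fin a) (j : Fin c) (k : Fin b) :
    Measurable (cellMap PXY PX PY PZ i j k) :=
  (measurable_affineIoo _ _ _ _).prodMap (measurable_affineIoo _ _ _ _)

lemma eq_cellMap {T0 : ℝ → Fin b → ℝ} {T1 : ℝ → ℝ}
    (hT0 : ∀ (k : Fin b) (i : Fin a), 0 < PX i →
      ∀ θ ∈ Set.Icc (cum PX i) (cum PX i + PX i),
        T0 θ k = (∑ i' ∈ Finset.univ.filter (fun i' => i' < i), PXY (i', k)) / PY k
          + (θ - cum PX i) * (PXY (i, k) / (PY k * PX i)))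
    (hT1 : ∀ j : Fin c, ∀ φ ∈ Set.Ioo (cum PZ j) (cum PZ j + PZ j),
      T1 φ = (φ - cum PZ j) / PZ j)
    {θ φ : ℝ} {i : Fin a} {j : Fin c} (hθ : θ ∈ partitionIoo PX i) (hφ : φ ∈ partitionIoo PZ j)
    (k : Fin b) : (T0 θ k, T1 φ) = cellMap PXY PX PY PZ i j k (θ, φ) := by
  rw [hT0 k i (pos_of_mem_partitionIoo hθ) θ (Ioo_subset_Icc_self hθ), hT1 j φ hφ]
  simp only [cellMap, Prod.map, affineIoo, condPX, cum, Finset.sum_div]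
  congr 1 <;> ring

lemma map_cellMap_volume_restrict {i : Fin a} {j : Fin c} {k : Fin b}
    (hPX : 0 ≤ PX i) (hPZ : 0 ≤ PZ j) (hcell : PX i * PZ j ≤ PXY (i, k))
    (hcol : PXY (i, k) ≤ PY k) :
    (volume.restrict (partitionIoo PX i ×ˢ partitionIoo PZ j)).map (cellMap PXY PX PY PZ i j k)
      = ENNReal.ofReal (PX i * PZ j / condPX PXY PY k i) •
          volume.restrict (partitionIoo (condPX PXY PY k) i ×ˢ Ioo 0 1) := by
  rcases hPX.eq_or_lt with hPX0 | hPXpos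
  · simp [partitionIoo, ← hPX0]
  rcases hPZ.eq_or_lt with hPZ0 | hPZpos
  · simp [partitionIoo, ← hPZ0]
  have hPXY : 0 < PXY (i, k) := (mul_pos hPXpos hPZpos).trans_le hcell
  have hq : 0 < condPX PXY PY k i := div_pos hPXY (hPXY.trans_le hcol)
  have h := map_prodMap_affineIoo_volume_restrict (α := cum PX i) (γ := cum (condPX PXY PY k) i)
    (α' := cum PZ j) (γ' := 0) hPXpos hq hPZpos one_pos
  rw [zero_add] at h
  rw [cellMap, partitionIoo, partitionIoo, partitionIoo, h]
  congr 2
  ring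

lemma sum_map_cellMap_volume_restrict {ξ : Fin a × Fin c → Fin b}
    (hPXY0 : ∀ q, 0 ≤ PXY q) (hPX : ∀ i, PX i = ∑ k, PXY (i, k))
    (hPY : ∀ k, PY k = ∑ i, PXY (i, k)) (hPZ0 : ∀ j, 0 ≤ PZ j)
    (hξ : ∀ i k, ∑ j ∈ Finset.univ.filter (fun j => ξ (i, j) = k), PX i * PZ j = PXY (i, k))
    (k : Fin b) :
    ∑ q ∈ Finset.univ.filter (fun q => ξ q = k),
        (volume.restrict (partitionIoo PX q.1 ×ˢ partitionIoo PZ q.2)).map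
          (cellMap PXY PX PY PZ q.1 q.2 k)
      = ENNReal.ofReal (PY k) • uniformSquare := by
  have hPX0 : ∀ i, 0 ≤ PX i := fun i => hPX i ▸ Finset.sum_nonneg fun _ _ => hPXY0 _
  have hcol : ∀ i, PXY (i, k) ≤ PY k := fun i =>
    hPY k ▸ Finset.single_le_sum (fun i _ => hPXY0 (i, k)) (Finset.mem_univ i)
  have hcell : ∀ i j, ξ (i, j) = k → PX i * PZ j ≤ PXY (i, k) := fun i j hij =>
    hξ i k ▸ Finset.single_le_sum (f := fun j => PX i * PZ j)
      (fun j _ => mul_nonneg (hPX0 i) (hPZ0 j)) (by simp [hij])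
  set r := condPX PXY PY k
  set S := fun i => volume.restrict (partitionIoo r i ×ˢ Ioo (0 : ℝ) 1)
  rw [Finset.sum_congr rfl fun x hx => map_cellMap_volume_restrict (hPX0 x.1) (hPZ0 x.2)
    (hcell x.1 x.2 (Finset.mem_filter.1 hx).2) (hcol x.1)]
  rcases (show 0 ≤ PY k from hPY k ▸ Finset.sum_nonneg fun i _ => hPXY0 _).eq_or_lt
    with hPY0 | hPYpos
  · -- all coefficients vanish by the convention `x / 0 = 0`
    simp [condPX, ← hPY0]
  have hq0 : ∀ i, 0 ≤ r i := fun i => div_nonneg (hPXY0 _) hPYpos.le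
  have hq1 : ∑ i, r i = 1 := by
    simp only [r, condPX]
    rw [← Finset.sum_div, ← hPY k, div_self hPYpos.ne']
  have hrow : ∀ i, ∑ j ∈ Finset.univ.filter (fun j => ξ (i, j) = k),
      ENNReal.ofReal (PX i * PZ j / r i) • S i = ENNReal.ofReal (PY k) • S i := by
    intro i
    rw [← Finset.sum_smul, ← ENNReal.ofReal_sum_of_nonneg
      fun j _ => div_nonneg (mul_nonneg (hPX0 i) (hPZ0 j)) (hq0 i), ← Finset.sum_div, hξ]
    rcases (hq0 i).eq_or_lt with hqi0 | hqipos
    · simp [S, partitionIoo, ← hqi0]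
    · have hPXYpos : 0 < PXY (i, k) := by
        simpa only [r, condPX, div_pos_iff_of_pos_right hPYpos] using hqipos
      rw [show r i = PXY (i, k) / PY k from rfl, div_div_cancel₀ hPXYpos.ne']
  rw [Finset.sum_filter, Fintype.sum_prod_type]
  simp only [← Finset.sum_filter]
  rw [Finset.sum_congr rfl fun i _ => hrow i, ← Finset.smul_sum,
    sum_volume_restrict_partitionIoo_prod hq0 hq1]
  rfl

end CellMap

structure IsDynamicalSource {Ω : Type*} [MeasurableSpace Ω] (P : Measure Ω) {a b c : ℕ}
    (PXY : Fin a × Fin b → ℝ) (PX : Fin a → ℝ) (PY : Fin b → ℝ) (PZ : Fin c → ℝ)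
    (ξ : Fin a × Fin c → Fin b) (T0 : ℝ → Fin b → ℝ) (T1 : ℝ → ℝ)
    (Θ Φ : ℕ → Ω → ℝ) (X : ℕ → Ω → Fin a) (Z : ℕ → Ω → Fin c) (Y : ℕ → Ω → Fin b) : Prop where
  pxy_nonneg : ∀ q, 0 ≤ PXY q
  sum_pxy : ∑ q, PXY q = 1
  px_eq : ∀ i, PX i = ∑ k, PXY (i, k)
  py_eq : ∀ k, PY k = ∑ i, PXY (i, k)
  pz_nonneg : ∀ j, 0 ≤ PZ j
  sum_pz : ∑ j, PZ j = 1
  sum_px_mul_pz : ∀ i k,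
    ∑ j ∈ Finset.univ.filter (fun j => ξ (i, j) = k), PX i * PZ j = PXY (i, k)
  T0_eq : ∀ (k : Fin b) (i : Fin a), 0 < PX i →
    ∀ θ ∈ Set.Icc (cum PX i) (cum PX i + PX i),
      T0 θ k = (∑ i' ∈ Finset.univ.filter (fun i' => i' < i), PXY (i', k)) / PY k
        + (θ - cum PX i) * (PXY (i, k) / (PY k * PX i))
  T1_eq : ∀ j : Fin c, ∀ φ ∈ Set.Ioo (cum PZ j) (cum PZ j + PZ j), T1 φ = (φ - cum PZ j) / PZ j
  measurable_Θ : ∀ n, Measurable (Θ n)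
  measurable_Φ : ∀ n, Measurable (Φ n)
  measurable_X : ∀ n, Measurable (X n)
  measurable_Z : ∀ n, Measurable (Z n)
  map_init : P.map (fun ω => (Θ 0 ω, Φ 0 ω)) = uniformSquare
  mem_X : ∀ n, ∀ᵐ ω ∂P, Θ n ω ∈ partitionIoo PX (X n ω)
  mem_Z : ∀ n, ∀ᵐ ω ∂P, Φ n ω ∈ partitionIoo PZ (Z n ω)
  Y_eq : ∀ n ω, Y n ω = ξ (X n ω, Z n ω)
  Θ_succ : ∀ n, ∀ᵐ ω ∂P, Θ (n + 1) ω = T0 (Θ n ω) (Y n ω)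
  Φ_succ : ∀ n, ∀ᵐ ω ∂P, Φ (n + 1) ω = T1 (Φ n ω)

namespace IsDynamicalSource

variable {Ω : Type*} [MeasurableSpace Ω] {P : Measure Ω} {a b c : ℕ}
  {PXY : Fin a × Fin b → ℝ} {PX : Fin a → ℝ} {PY : Fin b → ℝ} {PZ : Fin c → ℝ}
  {ξ : Fin a × Fin c → Fin b} {T0 : ℝ → Fin b → ℝ} {T1 : ℝ → ℝ}
  {Θ Φ : ℕ → Ω → ℝ} {X : ℕ → Ω → Fin a} {Z : ℕ → Ω → Fin c} {Y : ℕ → Ω → Fin b}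

lemma px_nonneg (h : IsDynamicalSource P PXY PX PY PZ ξ T0 T1 Θ Φ X Z Y) (i : Fin a) :
    0 ≤ PX i :=
  h.px_eq i ▸ Finset.sum_nonneg fun _ _ => h.pxy_nonneg _

lemma sum_px (h : IsDynamicalSource P PXY PX PY PZ ξ T0 T1 Θ Φ X Z Y) : ∑ i, PX i = 1 := by
  simp_rw [h.px_eq, ← h.sum_pxy, Fintype.sum_prod_type]

lemma measurable_Y (h : IsDynamicalSource P PXY PX PY PZ ξ T0 T1 Θ Φ X Z Y) (n : ℕ) :
    Measurable (Y n) := by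
  rw [show Y n = fun ω => ξ (X n ω, Z n ω) from funext (h.Y_eq n)]
  exact (measurable_of_countable ξ).comp ((h.measurable_X n).prodMk (h.measurable_Z n))

lemma measurable_pair (h : IsDynamicalSource P PXY PX PY PZ ξ T0 T1 Θ Φ X Z Y) (n : ℕ) :
    Measurable fun ω => (Θ n ω, Φ n ω) :=
  (h.measurable_Θ n).prodMk (h.measurable_Φ n)

lemma measurable_past (h : IsDynamicalSource P PXY PX PY PZ ξ T0 T1 Θ Φ X Z Y) (n : ℕ) :
    Measurable fun ω (l : Fin n) => Y l ω :=
  measurable_pi_lambda _ fun l => h.measurable_Y l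

lemma cell_subset (h : IsDynamicalSource P PXY PX PY PZ ξ T0 T1 Θ Φ X Z Y) (i : Fin a)
    (j : Fin c) : partitionIoo PX i ×ˢ partitionIoo PZ j ⊆ Ioo 0 1 ×ˢ Ioo 0 1 :=
  prod_mono (partitionIoo_subset_Ioo h.px_nonneg h.sum_px i)
    (partitionIoo_subset_Ioo h.pz_nonneg h.sum_pz j)

lemma preimage_X_Z_ae_eq (h : IsDynamicalSource P PXY PX PY PZ ξ T0 T1 Θ Φ X Z Y) (n : ℕ)
    (q : Fin a × Fin c) :
    (fun ω => (X n ω, Z n ω)) ⁻¹' {q}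
      =ᵐ[P] (fun ω => (Θ n ω, Φ n ω)) ⁻¹' (partitionIoo PX q.1 ×ˢ partitionIoo PZ q.2) := by
  rw [← Prod.mk.eta (p := q), ← singleton_prod_singleton]
  exact (preimage_singleton_ae_eq_of_mem_partitionIoo h.px_nonneg (h.mem_X n) q.1).inter
    (preimage_singleton_ae_eq_of_mem_partitionIoo h.pz_nonneg (h.mem_Z n) q.2)

lemma pair_succ_ae_eq (h : IsDynamicalSource P PXY PX PY PZ ξ T0 T1 Θ Φ X Z Y) (n : ℕ) :
    ∀ᵐ ω ∂P, (Θ (n + 1) ω, Φ (n + 1) ω)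
      = cellMap PXY PX PY PZ (X n ω) (Z n ω) (Y n ω) (Θ n ω, Φ n ω) := by
  filter_upwards [h.Θ_succ n, h.Φ_succ n, h.mem_X n, h.mem_Z n] with ω hΘ hΦ hX hZ
  rw [hΘ, hΦ]
  exact eq_cellMap h.T0_eq h.T1_eq hX hZ _

lemma map_restrict_inter_Y (h : IsDynamicalSource P PXY PX PY PZ ξ T0 T1 Θ Φ X Z Y) {n : ℕ}
    {E : Set Ω} (hmap : (P.restrict E).map (fun ω => (Θ n ω, Φ n ω)) = P E • uniformSquare)
    (k : Fin b) :
    (P.restrict (E ∩ Y n ⁻¹' {k})).map (fun ω => (Θ (n + 1) ω, Φ (n + 1) ω))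
      = (P E * ENNReal.ofReal (PY k)) • uniformSquare := by
  set W : Ω → Fin a × Fin c := fun ω => (X n ω, Z n ω)
  have hW : Measurable W := (h.measurable_X n).prodMk (h.measurable_Z n)
  set F := Finset.univ.filter (fun q => ξ q = k)
  have hYW : Y n ⁻¹' {k} = W ⁻¹' F := by
    ext ω
    simp [W, F, h.Y_eq]
  have hcell : ∀ q ∈ F,
      ((P.restrict E).restrict (W ⁻¹' {q})).map (fun ω => (Θ (n + 1) ω, Φ (n + 1) ω))
        = P E • (volume.restrict (partitionIoo PX q.1 ×ˢ partitionIoo PZ q.2)).map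
            (cellMap PXY PX PY PZ q.1 q.2 k) := by
    intro q hq
    have hcellm := (measurableSet_partitionIoo PX q.1).prod (measurableSet_partitionIoo PZ q.2)
    have hsucc : (fun ω => (Θ (n + 1) ω, Φ (n + 1) ω))
        =ᵐ[(P.restrict E).restrict (W ⁻¹' {q})]
          cellMap PXY PX PY PZ q.1 q.2 k ∘ fun ω => (Θ n ω, Φ n ω) := by
      filter_upwards [ae_restrict_of_ae (ae_restrict_of_ae (h.pair_succ_ae_eq n)),
        ae_restrict_mem (hW (measurableSet_singleton q))] with ω hω hq'
      obtain rfl : (X n ω, Z n ω) = q := hq'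
      rw [hω, h.Y_eq, (Finset.mem_filter.1 hq).2]
      rfl
    rw [Measure.map_congr hsucc, ← Measure.map_map (measurable_cellMap _ _ _ _ _ _ _)
      (h.measurable_pair n), map_restrict_of_ae_eq_preimage (h.measurable_pair n) hcellm
      (ae_restrict_of_ae (h.preimage_X_Z_ae_eq n q)), hmap, Measure.restrict_smul,
      uniformSquare_restrict hcellm (h.cell_subset _ _), Measure.map_smul]
  rw [inter_comm, ← Measure.restrict_restrict (h.measurable_Y n (measurableSet_singleton k)),
    hYW, restrict_preimage_finset_eq_sum _ hW,
    Measure.map_finset_sum (h.measurable_pair _).aemeasurable, Finset.sum_congr rfl hcell,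
    ← Finset.smul_sum, sum_map_cellMap_volume_restrict h.pxy_nonneg h.px_eq h.py_eq h.pz_nonneg
    h.sum_px_mul_pz, smul_smul]

lemma measure_inter_Y (h : IsDynamicalSource P PXY PX PY PZ ξ T0 T1 Θ Φ X Z Y) {n : ℕ}
    {E : Set Ω} (hmap : (P.restrict E).map (fun ω => (Θ n ω, Φ n ω)) = P E • uniformSquare)
    (k : Fin b) : P (E ∩ Y n ⁻¹' {k}) = P E * ENNReal.ofReal (PY k) := by
  simpa [Measure.map_apply (h.measurable_pair _) MeasurableSet.univ, uniformSquare_univ]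
    using congrArg (fun μ : Measure (ℝ × ℝ) => μ univ) (h.map_restrict_inter_Y hmap k)

lemma map_restrict_past (h : IsDynamicalSource P PXY PX PY PZ ξ T0 T1 Θ Φ X Z Y)
    [IsProbabilityMeasure P] (n : ℕ) (y : Fin n → Fin b) :
    (P.restrict ((fun ω (l : Fin n) => Y l ω) ⁻¹' {y})).map (fun ω => (Θ n ω, Φ n ω))
      = P ((fun ω (l : Fin n) => Y l ω) ⁻¹' {y}) • uniformSquare := by
  induction n with
  | zero =>
    have huniv : (fun ω (l : Fin 0) => Y l ω) ⁻¹' {y} = univ :=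
      eq_univ_of_forall fun _ => Subsingleton.elim _ _
    rw [huniv, Measure.restrict_univ, measure_univ, one_smul, h.map_init]
  | succ n ih =>
    have hpast : (fun ω (l : Fin (n + 1)) => Y l ω) ⁻¹' {y}
        = (fun ω (l : Fin n) => Y l ω) ⁻¹' {Fin.init y} ∩ Y n ⁻¹' {y (Fin.last n)} := by
      ext ω
      simp [funext_iff, Fin.forall_fin_succ', Fin.init]
    rw [hpast, h.map_restrict_inter_Y (ih _), h.measure_inter_Y (ih _)]

lemma map_pair (h : IsDynamicalSource P PXY PX PY PZ ξ T0 T1 Θ Φ X Z Y)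
    [IsProbabilityMeasure P] (n : ℕ) : P.map (fun ω => (Θ n ω, Φ n ω)) = uniformSquare := by
  rw [map_eq_smul_of_map_restrict_preimage_singleton (h.measurable_past n) (h.measurable_pair n)
    (h.map_restrict_past n), measure_univ, one_smul]

lemma measure_inter_X (h : IsDynamicalSource P PXY PX PY PZ ξ T0 T1 Θ Φ X Z Y) {n : ℕ}
    {E : Set Ω} (hmap : (P.restrict E).map (fun ω => (Θ n ω, Φ n ω)) = P E • uniformSquare)
    (i : Fin a) : P (E ∩ X n ⁻¹' {i}) = P E * ENNReal.ofReal (PX i) := by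
  have hstrip : uniformSquare (partitionIoo PX i ×ˢ univ) = ENNReal.ofReal (PX i) := by
    rw [uniformSquare_prod, inter_eq_left.2 (partitionIoo_subset_Ioo h.px_nonneg h.sum_px i),
      univ_inter, volume_partitionIoo, Real.volume_Ioo, sub_zero, ENNReal.ofReal_one, mul_one]
  have hX : X n ⁻¹' {i} =ᵐ[P.restrict E]
      (fun ω => (Θ n ω, Φ n ω)) ⁻¹' (partitionIoo PX i ×ˢ univ) := by
    rw [mk_preimage_prod, preimage_univ, inter_univ]
    exact ae_restrict_of_ae
      (preimage_singleton_ae_eq_of_mem_partitionIoo h.px_nonneg (h.mem_X n) i)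
  rw [inter_comm, ← Measure.restrict_apply (h.measurable_X n (measurableSet_singleton i)),
    measure_congr hX, ← Measure.map_apply (h.measurable_pair n)
    ((measurableSet_partitionIoo PX i).prod MeasurableSet.univ), hmap, Measure.smul_apply,
    hstrip, smul_eq_mul]

lemma measure_X (h : IsDynamicalSource P PXY PX PY PZ ξ T0 T1 Θ Φ X Z Y)
    [IsProbabilityMeasure P] (n : ℕ) (i : Fin a) : P (X n ⁻¹' {i}) = ENNReal.ofReal (PX i) := by
  simpa using h.measure_inter_X (E := univ) (by rw [Measure.restrict_univ, measure_univ, one_smul,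
    h.map_pair n]) i

lemma measure_X_Z (h : IsDynamicalSource P PXY PX PY PZ ξ T0 T1 Θ Φ X Z Y)
    [IsProbabilityMeasure P] (n : ℕ) (i : Fin a) (j : Fin c) :
    P (X n ⁻¹' {i} ∩ Z n ⁻¹' {j}) = ENNReal.ofReal (PX i * PZ j) := by
  have hcell := (measurableSet_partitionIoo PX i).prod (measurableSet_partitionIoo PZ j)
  rw [← mk_preimage_prod, singleton_prod_singleton]
  calc P ((fun ω => (X n ω, Z n ω)) ⁻¹' {(i, j)})
      = P ((fun ω => (Θ n ω, Φ n ω)) ⁻¹' (partitionIoo PX i ×ˢ partitionIoo PZ j)) :=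
        measure_congr (h.preimage_X_Z_ae_eq n (i, j))
    _ = uniformSquare (partitionIoo PX i ×ˢ partitionIoo PZ j) := by
        rw [← h.map_pair n, Measure.map_apply (h.measurable_pair n) hcell]
    _ = ENNReal.ofReal (PX i * PZ j) := by
        rw [uniformSquare_prod, inter_eq_left.2 (partitionIoo_subset_Ioo h.px_nonneg h.sum_px i),
          inter_eq_left.2 (partitionIoo_subset_Ioo h.pz_nonneg h.sum_pz j), volume_partitionIoo,
          volume_partitionIoo, ENNReal.ofReal_mul (h.px_nonneg i)]

lemma measure_X_Y (h : IsDynamicalSource P PXY PX PY PZ ξ T0 T1 Θ Φ X Z Y)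
    [IsProbabilityMeasure P] (n : ℕ) (i : Fin a) (k : Fin b) :
    P {ω | X n ω = i ∧ Y n ω = k} = ENNReal.ofReal (PXY (i, k)) := by
  have hset : {ω | X n ω = i ∧ Y n ω = k}
      = Z n ⁻¹' (Finset.univ.filter fun j => ξ (i, j) = k) ∩ X n ⁻¹' {i} := by
    ext ω
    simp only [mem_inter_iff, mem_preimage, Finset.coe_filter, Finset.mem_univ,
      true_and, mem_singleton_iff, h.Y_eq]
    grind
  have hXm := h.measurable_X n (measurableSet_singleton i)
  rw [hset, ← Measure.restrict_apply' hXm, ← sum_measure_preimage_singleton _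
    fun j _ => h.measurable_Z n (measurableSet_singleton j)]
  simp_rw [Measure.restrict_apply' hXm, inter_comm _ (X n ⁻¹' {i}), h.measure_X_Z]
  rw [← ENNReal.ofReal_sum_of_nonneg fun j _ => mul_nonneg (h.px_nonneg i) (h.pz_nonneg j),
    h.sum_px_mul_pz]

lemma indepFun_X_past (h : IsDynamicalSource P PXY PX PY PZ ξ T0 T1 Θ Φ X Z Y)
    [IsProbabilityMeasure P] (n : ℕ) : IndepFun (X n) (fun ω (l : Fin n) => Y l ω) P :=
  indepFun_of_measure_inter_preimage_singleton (h.measurable_X n) (h.measurable_past n)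
    fun i y => by
      rw [inter_comm, h.measure_inter_X (h.map_restrict_past n y), h.measure_X, mul_comm]

end IsDynamicalSource

/-- Indices are 0-based: `Θ 0` is the paper's `Θ₁`, and `(Y 0, …, Y (n-1))` is the past of `X n`. -/
theorem stmt_3
    {Ω : Type*} [MeasurableSpace Ω] (P : Measure Ω) [IsProbabilityMeasure P]
    {a b c : ℕ}
    (PXY : Fin a × Fin b → ℝ)
    (hPXY0 : ∀ q, 0 ≤ PXY q) (hPXY1 : ∑ q : Fin a × Fin b, PXY q = 1)
    (PX : Fin a → ℝ) (hPX : ∀ i, PX i = ∑ k, PXY (i, k))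
    (PY : Fin b → ℝ) (hPY : ∀ k, PY k = ∑ i, PXY (i, k))
    (PZ : Fin c → ℝ) (hPZ0 : ∀ j, 0 ≤ PZ j) (hPZ1 : ∑ j, PZ j = 1)
    (ξ : Fin a × Fin c → Fin b)
    (hξ : ∀ i k, ∑ j ∈ Finset.univ.filter (fun j => ξ (i, j) = k), PX i * PZ j = PXY (i, k))
    (T0 : ℝ → Fin b → ℝ)
    (hT0 : ∀ (k : Fin b) (i : Fin a), 0 < PX i →
      ∀ θ ∈ Set.Icc (cum PX i) (cum PX i + PX i),
        T0 θ k = (∑ i' ∈ Finset.univ.filter (fun i' => i' < i), PXY (i', k)) / PY k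
          + (θ - cum PX i) * (PXY (i, k) / (PY k * PX i)))
    (T1 : ℝ → ℝ)
    (hT1 : ∀ j : Fin c, ∀ φ ∈ Set.Ioo (cum PZ j) (cum PZ j + PZ j),
      T1 φ = (φ - cum PZ j) / PZ j)
    (Θ Φ : ℕ → Ω → ℝ) (X : ℕ → Ω → Fin a) (Z : ℕ → Ω → Fin c) (Y : ℕ → Ω → Fin b)
    (hΘm : ∀ n, Measurable (Θ n)) (hΦm : ∀ n, Measurable (Φ n))
    (hXm : ∀ n, Measurable (X n)) (hZm : ∀ n, Measurable (Z n))
    (hinit : Measure.map (fun ω => (Θ 0 ω, Φ 0 ω)) P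
      = volume.restrict (Set.Ioo (0:ℝ) 1 ×ˢ Set.Ioo (0:ℝ) 1))
    (hXdef : ∀ n, ∀ᵐ ω ∂P, Θ n ω ∈ Set.Ioo (cum PX (X n ω)) (cum PX (X n ω) + PX (X n ω)))
    (hZdef : ∀ n, ∀ᵐ ω ∂P, Φ n ω ∈ Set.Ioo (cum PZ (Z n ω)) (cum PZ (Z n ω) + PZ (Z n ω)))
    (hYdef : ∀ n ω, Y n ω = ξ (X n ω, Z n ω))
    (hΘrec : ∀ n, ∀ᵐ ω ∂P, Θ (n + 1) ω = T0 (Θ n ω) (Y n ω))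
    (hΦrec : ∀ n, ∀ᵐ ω ∂P, Φ (n + 1) ω = T1 (Φ n ω))
    :
    (∀ n i k, P {ω | X n ω = i ∧ Y n ω = k} = ENNReal.ofReal (PXY (i, k))) ∧
    (∀ n : ℕ, IndepFun (X n) (fun ω (l : Fin n) => Y l.val ω) P) := by
  have h : IsDynamicalSource P PXY PX PY PZ ξ T0 T1 Θ Φ X Z Y := ⟨hPXY0, hPXY1, hPX, hPY, hPZ0,
    hPZ1, hξ, hT0, hT1, hΘm, hΦm, hXm, hZm, hinit, hXdef, hZdef, hYdef, hΘrec, hΦrec⟩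
  exact ⟨h.measure_X_Y, h.indepFun_X_past⟩
end

section
/- Let A_1, …, A_K be pairwise disjoint nonempty intervals in ℝ, and let {J_m}_{m∈M} be a family of pairwise disjoint intervals in ℝ. Then the number of indices m ∈ M for which J_m intersects at least two of the intervals A_1, …, A_K is at most K − 1. -/
open Set

/-- Two disjoint order-connected sets in `ℝ` are totally separated: if some element of `A` is
below some element of `B`, then every element of `A` is below every element of `B`. -/
lemma sep_lemma {A B : Set ℝ} (hd : Disjoint A B) (hA : A.OrdConnected)
    (hB : B.OrdConnected) {a b : ℝ} (ha : a ∈ A) (hb : b ∈ B) (hab : a < b) :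
    ∀ x ∈ A, ∀ y ∈ B, x < y := by
  intro x hx y hy
  by_contra h
  push_neg at h
  have hne : y ≠ x := fun e => Set.disjoint_left.mp hd hx (e ▸ hy)
  have hyx : y < x := lt_of_le_of_ne h hne
  rcases le_total a y with hay | hya
  · exact Set.disjoint_left.mp hd (hA.out ha hx ⟨hay, hyx.le⟩) hy
  · exact Set.disjoint_left.mp hd ha (hB.out hy hb ⟨hya, hab.le⟩)

/-- Combinatorial counting step used in Lemma 4 of the paper: if `A 0, …, A (K-1)` are pairwise
disjoint nonempty intervals in `ℝ` (intervals = order-connected sets) and `(J m)` is a family of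
pairwise disjoint intervals in `ℝ`, then the set of indices `m` for which `J m` intersects at
least two of the intervals `A i` is finite of cardinality at most `K - 1`. -/
theorem stmt_10 {M : Type*} (K : ℕ) (A : Fin K → Set ℝ) (J : M → Set ℝ)
    (hAne : ∀ i, (A i).Nonempty)
    (hAint : ∀ i, (A i).OrdConnected)
    (hAdisj : ∀ i i', i ≠ i' → Disjoint (A i) (A i'))
    (hJint : ∀ m, (J m).OrdConnected)
    (hJdisj : ∀ m m', m ≠ m' → Disjoint (J m) (J m')) :
    {m : M | ∃ i i' : Fin K, i ≠ i' ∧ (J m ∩ A i).Nonempty ∧ (J m ∩ A i').Nonempty}.Finite ∧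
    {m : M | ∃ i i' : Fin K, i ≠ i' ∧ (J m ∩ A i).Nonempty ∧ (J m ∩ A i').Nonempty}.ncard
      ≤ K - 1 := by
  classical
  set S := {m : M | ∃ i i' : Fin K, i ≠ i' ∧ (J m ∩ A i).Nonempty ∧ (J m ∩ A i').Nonempty}
    with hS
  rcases Set.eq_empty_or_nonempty S with hE | hNE
  · simp [hE]
  -- representative points
  set a : Fin K → ℝ := fun i => (hAne i).choose with ha_def
  have ha : ∀ i, a i ∈ A i := fun i => (hAne i).choose_spec
  have haNe : ∀ i i' : Fin K, i ≠ i' → a i ≠ a i' := by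
    intro i i' hii e
    exact Set.disjoint_left.mp (hAdisj i i' hii) (ha i) (e ▸ ha i')
  obtain ⟨m0, hm0⟩ := hNE
  obtain ⟨i1, _, _, _, _⟩ := hm0
  haveI : Nonempty (Fin K) := ⟨i1⟩
  obtain ⟨i₀, hi₀⟩ := Finite.exists_max a
  -- the minimizing index
  have hmin : ∀ m ∈ S, ∃ i : Fin K, (J m ∩ A i).Nonempty ∧
      ∀ j, (J m ∩ A j).Nonempty → a i ≤ a j := by
    intro m hm
    obtain ⟨j1, j2, hne, h1, h2⟩ := hm
    obtain ⟨i, hi, hmini⟩ := Finset.exists_min_image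
      (Finset.univ.filter fun j => (J m ∩ A j).Nonempty) a ⟨j1, by simp [h1]⟩
    exact ⟨i, by simpa using hi, fun j hj => hmini j (by simp [hj])⟩
  set f : M → Fin K := fun m => if h : m ∈ S then (hmin m h).choose else i₀ with hf
  have hfspec : ∀ m (hm : m ∈ S), (J m ∩ A (f m)).Nonempty ∧
      ∀ j, (J m ∩ A j).Nonempty → a (f m) ≤ a j := by
    intro m hm
    simp only [hf, dif_pos hm]
    exact (hmin m hm).choose_spec
  -- for each m ∈ S, there is j ≠ f m which J m meets, with a (f m) < a j
  have hcross : ∀ m ∈ S, ∃ j : Fin K, (J m ∩ A j).Nonempty ∧ a (f m) < a j := by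
    intro m hm
    have hmS := hm
    obtain ⟨j1, j2, hne, h1, h2⟩ := hm
    by_cases hj : j1 = f m
    · refine ⟨j2, h2, lt_of_le_of_ne ((hfspec m hmS).2 j2 h2)
        (haNe _ _ (by rw [← hj]; exact hne))⟩
    · exact ⟨j1, h1, lt_of_le_of_ne ((hfspec m hmS).2 j1 h1)
        (haNe _ _ (fun e => hj e.symm))⟩
  have hfne : ∀ m ∈ S, f m ≠ i₀ := by
    intro m hm e
    obtain ⟨j, _, hlt⟩ := hcross m hm
    rw [e] at hlt
    exact absurd (hi₀ j) (not_le.mpr hlt)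
  have hinj : Set.InjOn f S := by
    intro m hm m' hm' he
    by_contra hmm'
    obtain ⟨x, hxJ, hxA⟩ := (hfspec m hm).1
    obtain ⟨j, ⟨y, hyJ, hyA⟩, hlt⟩ := hcross m hm
    obtain ⟨x', hx'J, hx'A⟩ := (hfspec m' hm').1
    obtain ⟨j', ⟨y', hy'J, hy'A⟩, hlt'⟩ := hcross m' hm'
    rw [he] at hxA hlt
    -- everything in A (f m') is below everything in A j and A j'
    have hxy : x' < y := sep_lemma (hAdisj _ _ (fun e => absurd (e ▸ hlt) (lt_irrefl _)))
      (hAint _) (hAint _) (ha _) (ha _) hlt x' hx'A y hyA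
    have hx'y : x < y' := sep_lemma (hAdisj _ _ (fun e => absurd (e ▸ hlt') (lt_irrefl _)))
      (hAint _) (hAint _) (ha _) (ha _) hlt' x hxA y' hy'A
    rcases le_total x x' with h | h
    · exact Set.disjoint_left.mp (hJdisj m m' hmm')
        ((hJint m).out hxJ hyJ ⟨h, hxy.le⟩) hx'J
    · exact Set.disjoint_left.mp (hJdisj m' m (fun e => hmm' e.symm))
        ((hJint m').out hx'J hy'J ⟨h, hx'y.le⟩) hxJ
  have himg : f '' S ⊆ {i₀}ᶜ := by
    rintro _ ⟨m, hm, rfl⟩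
    exact hfne m hm
  have hSfin : S.Finite := Set.Finite.of_finite_image (Set.toFinite (f '' S)) hinj
  refine ⟨hSfin, ?_⟩
  have h1 : S.ncard = (f '' S).ncard := (Set.ncard_image_of_injOn hinj).symm
  have h2 : (f '' S).ncard ≤ ({i₀}ᶜ : Set (Fin K)).ncard :=
    Set.ncard_le_ncard himg (Set.toFinite _)
  have h3 : ({i₀}ᶜ : Set (Fin K)).ncard = K - 1 := by
    rw [Set.ncard_eq_toFinset_card']
    simp [Finset.card_compl]
  omega
end

section
/- Let 𝒴 and 𝒳 be finite alphabets, P_Y a probability mass function on 𝒴, and d: 𝒳×𝒴 → [0, d_max] a bounded distortion measure. Define the rate-distortion function R(D) as the infimum of I(X;Y) = Σ_{x,y} P_Y(y) W(x|y) log₂( W(x|y) / Σ_{y'} P_Y(y') W(x|y') ) over all conditional probability mass functions W(·|·) from 𝒴 to 𝒳 satisfying Σ_{x,y} P_Y(y) W(x|y) d(x,y) ≤ D. Then for every D such that some conditional pmf W achieves expected distortion at most D, and for every δ > 0 and ε > 0, there exist n ≥ 1, a natural number M ≤ 2^{n(R(D)+δ)}, an encoding function e: 𝒴^n → {1,…,M},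 and decoding functions f_k: {1,…,M} × 𝒴^{k−1} → 𝒳 for k = 1,…,n, such that when Y_1,…,Y_n are i.i.d. with distribution P_Y, the time-averaged expected distortion satisfies n^{-1} Σ_{k=1}^n E[ d( f_k( e(Y_1,…,Y_n), (Y_1,…,Y_{k−1}) ), Y_k ) ] ≤ D + ε. -/
/-!
Random coding. Fix a test channel `W` with `I(W) < R(D) + δ/2` and expected distortion at most
`D`, and call a pair of blocks `(x, y)` typical when its information density is below `nθ`
(`θ = R(D) + δ/2`) and its distortion below `nη` (`η = D + ε/2`). By Chebyshev's inequality a pair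
drawn from `(P_Y W)^n` is atypical with probability `O(1/n)`. On typical pairs
`P_X^n(x) ≥ 2^(-nθ) W^n(x | y)`, so if `W^n(· | y)` makes `(·, y)` typical with probability `Q(y)`,
then `M ≈ 2^(n(R(D)+δ))` codewords drawn i.i.d. from `P_X^n` all miss `y` with probability at most
`(1 - 2^(-nθ) Q(y))^M ≤ 1 - Q(y) + exp(-M 2^(-nθ))`, and `M 2^(-nθ) → ∞`. Some codebook does at
least as well as the average, and its minimum-distortion encoder comes within `ε` of `D`; the
decoders need not look at the feedforward.
-/

open Finset Real Filter Topology

section FiniteProbability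

variable {ι β : Type*} [Fintype ι] [Fintype β]

lemma exists_le_sum_mul_of_mem_stdSimplex {w : ι → ℝ} (hw : w ∈ stdSimplex ℝ ι) (F : ι → ℝ) :
    ∃ i, F i ≤ ∑ j, w j * F j := by
  have hne : (univ : Finset ι).Nonempty := nonempty_of_sum_ne_zero (by rw [hw.2]; exact one_ne_zero)
  obtain ⟨i, -, hi⟩ := univ.exists_min_image F hne
  refine ⟨i, ?_⟩
  calc F i = ∑ j, w j * F i := by rw [← sum_mul, hw.2, one_mul]
    _ ≤ ∑ j, w j * F j :=
        sum_le_sum fun j _ => mul_le_mul_of_nonneg_left (hi j (mem_univ j)) (hw.1 j)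

lemma sum_mul_le_add_mul_sum_filter {w g : ι → ℝ} (hw : w ∈ stdSimplex ℝ ι) (p : ι → Prop)
    [DecidablePred p] {a b : ℝ} (ha : 0 ≤ a) (hga : ∀ i, ¬p i → g i ≤ a) (hgb : ∀ i, g i ≤ b) :
    ∑ i, w i * g i ≤ a + b * ∑ i with p i, w i := by
  rw [← sum_filter_not_add_sum_filter univ p, mul_sum]
  refine add_le_add ?_ (sum_le_sum fun i _ => by
    rw [mul_comm b]; exact mul_le_mul_of_nonneg_left (hgb i) (hw.1 i))
  calc ∑ i with ¬p i, w i * g i ≤ ∑ i with ¬p i, w i * a :=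
        sum_le_sum fun i hi => mul_le_mul_of_nonneg_left (hga i (mem_filter.1 hi).2) (hw.1 i)
    _ ≤ ∑ i, w i * a := sum_le_sum_of_subset_of_nonneg (filter_subset _ _)
        fun i _ _ => mul_nonneg (hw.1 i) ha
    _ = a := by rw [← sum_mul, hw.2, one_mul]

lemma sum_filter_or_le {w : ι → ℝ} (hw : ∀ i, 0 ≤ w i) (p q : ι → Prop) [DecidablePred p]
    [DecidablePred q] : ∑ i with p i ∨ q i, w i ≤ ∑ i with p i, w i + ∑ i with q i, w i := by
  classical
  rw [filter_or, ← sum_union_inter]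
  exact le_add_of_nonneg_right (sum_nonneg fun i _ => hw i)

lemma sum_filter_not_eq_one_sub {w : ι → ℝ} (hw : w ∈ stdSimplex ℝ ι) (p : ι → Prop)
    [DecidablePred p] : ∑ i with ¬p i, w i = 1 - ∑ i with p i, w i := by
  rw [← hw.2, ← sum_filter_add_sum_filter_not univ p, add_sub_cancel_left]

lemma sum_filter_le_one {w : ι → ℝ} (hw : w ∈ stdSimplex ℝ ι) (p : ι → Prop) [DecidablePred p] :
    ∑ i with p i, w i ≤ 1 :=
  hw.2 ▸ sum_le_sum_of_subset_of_nonneg (filter_subset _ _) fun i _ _ => hw.1 i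

variable [DecidableEq ι]

lemma sum_prod_mul_prod (μ : β → ℝ) (φ : ι → β → ℝ) :
    ∑ b : ι → β, (∏ i, μ (b i)) * ∏ i, φ i (b i) = ∏ i, ∑ x, μ x * φ i x := by
  simp_rw [Fintype.prod_sum, ← prod_mul_distrib]

lemma prod_apply_mem_stdSimplex {μ : ι → β → ℝ} (hμ : ∀ i, μ i ∈ stdSimplex ℝ β) :
    (fun b : ι → β => ∏ i, μ i (b i)) ∈ stdSimplex ℝ (ι → β) :=
  ⟨fun b => prod_nonneg fun i _ => (hμ i).1 _, by simp [← Fintype.prod_sum, (hμ _).2]⟩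

lemma sum_prod_mul_apply_mul_apply {μ : β → ℝ} (hμ : μ ∈ stdSimplex ℝ β) (g h : β → ℝ) (j k : ι) :
    ∑ b : ι → β, (∏ i, μ (b i)) * (g (b j) * h (b k)) =
      if j = k then ∑ x, μ x * (g x * h x) else (∑ x, μ x * g x) * ∑ x, μ x * h x := by
  have hprod : ∀ b : ι → β, g (b j) * h (b k) =
      ∏ i, (if i = j then g (b i) else 1) * (if i = k then h (b i) else 1) := by
    intro b
    rw [prod_mul_distrib, Fintype.prod_ite_eq', Fintype.prod_ite_eq']
  simp_rw [hprod]
  rw [sum_prod_mul_prod μ (fun i x => (if i = j then g x else 1) * (if i = k then h x else 1))]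
  split_ifs with hjk
  · subst hjk
    rw [Fintype.prod_eq_single j fun i hi => by simp [hi, hμ.2]]
    simp
  · rw [prod_eq_mul_of_mem j k (mem_univ j) (mem_univ k) hjk fun i _ hi => by simp [hi, hμ.2]]
    simp [hjk, Ne.symm hjk]

lemma sum_prod_mul_sum_sq {μ : β → ℝ} (hμ : μ ∈ stdSimplex ℝ β) {g : β → ℝ}
    (hg : ∑ x, μ x * g x = 0) :
    ∑ b : ι → β, (∏ i, μ (b i)) * (∑ i, g (b i)) ^ 2 = Fintype.card ι * ∑ x, μ x * g x ^ 2 := by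
  simp_rw [sq, sum_mul_sum, mul_sum]
  rw [sum_comm]
  simp_rw [sum_comm (γ := ι → β), sum_prod_mul_apply_mul_apply hμ, hg, zero_mul]
  simp [mul_sum]

lemma sum_prod_filter_le_variance_div [Nonempty ι] {μ : β → ℝ} (hμ : μ ∈ stdSimplex ℝ β)
    (f : β → ℝ) {s : ℝ} (hs : ∑ x, μ x * f x < s) :
    ∑ b : ι → β with Fintype.card ι * s ≤ ∑ i, f (b i), ∏ i, μ (b i) ≤
      (∑ x, μ x * (f x - ∑ y, μ y * f y) ^ 2) / (Fintype.card ι * (s - ∑ x, μ x * f x) ^ 2) := by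
  set m := ∑ x, μ x * f x
  set n : ℝ := (Fintype.card ι : ℝ)
  have hn : 0 < n := Nat.cast_pos.2 Fintype.card_pos
  have hgap : 0 < n * (s - m) := mul_pos hn (sub_pos.2 hs)
  have hmean : ∑ x, μ x * (f x - m) = 0 := by
    simp only [mul_sub, sum_sub_distrib, ← sum_mul, hμ.2, one_mul, m, sub_self]
  calc ∑ b : ι → β with n * s ≤ ∑ i, f (b i), ∏ i, μ (b i)
      ≤ ∑ b : ι → β, (∏ i, μ (b i)) * ((∑ i, (f (b i) - m)) / (n * (s - m))) ^ 2 := by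
        rw [sum_filter]
        refine sum_le_sum fun b _ => ?_
        split_ifs with hb
        · refine le_mul_of_one_le_right (prod_nonneg fun i _ => hμ.1 _) (one_le_pow₀ ?_)
          rw [one_le_div hgap, sum_sub_distrib, sum_const, card_univ, nsmul_eq_mul]
          linarith
        · exact mul_nonneg (prod_nonneg fun i _ => hμ.1 _) (sq_nonneg _)
    _ = (∑ x, μ x * (f x - m) ^ 2) / (n * (s - m) ^ 2) := by
        simp_rw [div_pow, ← mul_div_assoc, ← sum_div, sum_prod_mul_sum_sq hμ hmean]
        field_simp
        ring

end FiniteProbability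

lemma one_sub_mul_pow_le_one_sub_add_exp {a q : ℝ} (hq0 : 0 ≤ q) (hq1 : q ≤ 1)
    (haq : a * q ≤ 1) (M : ℕ) : (1 - a * q) ^ M ≤ 1 - q + exp (-(M * a)) := by
  have hconv := convexOn_exp.2 (Set.mem_univ 0) (Set.mem_univ (-(M * a))) (sub_nonneg.2 hq1) hq0
    (sub_add_cancel 1 q)
  simp only [smul_eq_mul, mul_zero, zero_add, exp_zero, mul_one] at hconv
  calc (1 - a * q) ^ M ≤ exp (-(a * q)) ^ M :=
        pow_le_pow_left₀ (sub_nonneg.2 haq) (by linarith [add_one_le_exp (-(a * q))]) M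
    _ = exp (q * -(M * a)) := by rw [← exp_nat_mul]; ring_nf
    _ ≤ 1 - q + q * exp (-(M * a)) := hconv
    _ ≤ 1 - q + exp (-(M * a)) := by
        gcongr
        exact mul_le_of_le_one_left (exp_pos _).le hq1

section Covering

variable {α γ : Type*} [Fintype α] [Fintype γ] {ν : α → ℝ} (A : α → γ → Prop)
  [∀ x y, Decidable (A x y)]

lemma exists_codebook_sum_filter_le (hν : ν ∈ stdSimplex ℝ α) (P : γ → ℝ) (M : ℕ) :
    ∃ C : Fin M → α, ∑ y with ∀ i, ¬A (C i) y, P y ≤ ∑ y, P y * (∑ x with ¬A x y, ν x) ^ M := by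
  -- Some codebook is no worse than the average over codebooks with i.i.d. `ν` codewords, and
  -- for a fixed `y` the probability that all `M` codewords miss it factorizes.
  obtain ⟨C, hC⟩ := exists_le_sum_mul_of_mem_stdSimplex
    (prod_apply_mem_stdSimplex (ι := Fin M) fun _ => hν) fun C => ∑ y with ∀ i, ¬A (C i) y, P y
  refine ⟨C, hC.trans_eq ?_⟩
  have hmiss : ∀ y, ∑ C : Fin M → α, (∏ i, ν (C i)) * (if ∀ i, ¬A (C i) y then 1 else 0) =
      (∑ x with ¬A x y, ν x) ^ M := by
    intro y
    have hbool : ∀ C : Fin M → α,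
        (if ∀ i, ¬A (C i) y then (1 : ℝ) else 0) = ∏ i, if ¬A (C i) y then 1 else 0 :=
      fun C => by convert Fintype.prod_boole.symm
    simp_rw [hbool]
    rw [sum_prod_mul_prod ν fun _ x => if ¬A x y then 1 else 0]
    simp_rw [mul_boole, ← sum_filter, prod_const, card_univ, Fintype.card_fin]
  calc ∑ C : Fin M → α, (∏ i, ν (C i)) * ∑ y with ∀ i, ¬A (C i) y, P y
      = ∑ y, P y * ∑ C : Fin M → α, (∏ i, ν (C i)) * (if ∀ i, ¬A (C i) y then 1 else 0) := by
        simp_rw [sum_filter, mul_sum]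
        rw [sum_comm]
        refine sum_congr rfl fun y _ => sum_congr rfl fun C _ => ?_
        split_ifs <;> ring
    _ = ∑ y, P y * (∑ x with ¬A x y, ν x) ^ M := by simp_rw [hmiss]

lemma exists_codebook_covering (hν : ν ∈ stdSimplex ℝ α) {P : γ → ℝ} (hP : P ∈ stdSimplex ℝ γ)
    {V : α → γ → ℝ} (hV : ∀ y, (V · y) ∈ stdSimplex ℝ α) {a : ℝ}
    (hratio : ∀ x y, 0 < P y → A x y → a * V x y ≤ ν x) (M : ℕ) :
    ∃ C : Fin M → α, ∑ y with ∀ i, ¬A (C i) y, P y ≤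
      ∑ y, P y * ∑ x with ¬A x y, V x y + exp (-(M * a)) := by
  obtain ⟨C, hC⟩ := exists_codebook_sum_filter_le A hν P M
  refine ⟨C, hC.trans ?_⟩
  calc ∑ y, P y * (∑ x with ¬A x y, ν x) ^ M
      ≤ ∑ y, P y * (∑ x with ¬A x y, V x y + exp (-(M * a))) := by
        refine sum_le_sum fun y _ => ?_
        rcases (hP.1 y).eq_or_lt with hPy | hPy
        · simp [← hPy]
        refine mul_le_mul_of_nonneg_left ?_ hPy.le
        have hcover : a * ∑ x with A x y, V x y ≤ ∑ x with A x y, ν x := by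
          rw [mul_sum]
          exact sum_le_sum fun x hx => hratio x y hPy (mem_filter.1 hx).2
        rw [sum_filter_not_eq_one_sub hν, sum_filter_not_eq_one_sub (hV y)]
        calc (1 - ∑ x with A x y, ν x) ^ M ≤ (1 - a * ∑ x with A x y, V x y) ^ M :=
              pow_le_pow_left₀ (sub_nonneg.2 (sum_filter_le_one hν _)) (by linarith) M
          _ ≤ 1 - ∑ x with A x y, V x y + exp (-(M * a)) :=
              one_sub_mul_pow_le_one_sub_add_exp (sum_nonneg fun x _ => (hV y).1 x)
                (sum_filter_le_one (hV y) _) (hcover.trans (sum_filter_le_one hν _)) M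
    _ = ∑ y, P y * ∑ x with ¬A x y, V x y + exp (-(M * a)) := by
        simp_rw [mul_add, sum_add_distrib, ← sum_mul, hP.2, one_mul]

end Covering

lemma sub_le_mul_log_div {a b : ℝ} (ha : 0 ≤ a) (hb : 0 ≤ b) (hab : b = 0 → a = 0) :
    a - b ≤ a * log (a / b) := by
  rcases hb.eq_or_lt with rfl | hb
  · simp [hab rfl]
  have := mul_le_mul_of_nonneg_left (self_sub_one_le_mul_log (div_nonneg ha hb.le)) hb.le
  rwa [mul_sub, mul_one, mul_div_cancel₀ _ hb.ne', ← mul_assoc, mul_div_cancel₀ _ hb.ne'] at this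

section Channel

variable {𝒳 𝒴 : Type*} [Fintype 𝒳] [Fintype 𝒴] {PY : 𝒴 → ℝ} {W : 𝒳 → 𝒴 → ℝ}

noncomputable def outputDist (PY : 𝒴 → ℝ) (W : 𝒳 → 𝒴 → ℝ) (x : 𝒳) : ℝ := ∑ y, PY y * W x y

noncomputable def infoDensity (PY : 𝒴 → ℝ) (W : 𝒳 → 𝒴 → ℝ) (x : 𝒳) (y : 𝒴) : ℝ :=
  logb 2 (W x y / outputDist PY W x)

noncomputable def mutualInfo (PY : 𝒴 → ℝ) (W : 𝒳 → 𝒴 → ℝ) : ℝ :=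
  ∑ y, ∑ x, PY y * W x y * infoDensity PY W x y

noncomputable def expectedDistortion (PY : 𝒴 → ℝ) (W : 𝒳 → 𝒴 → ℝ) (d : 𝒳 → 𝒴 → ℝ) : ℝ :=
  ∑ y, ∑ x, PY y * W x y * d x y

noncomputable def jointDist (PY : 𝒴 → ℝ) (W : 𝒳 → 𝒴 → ℝ) (p : 𝒳 × 𝒴) : ℝ := PY p.2 * W p.1 p.2

noncomputable def jointVariance (PY : 𝒴 → ℝ) (W : 𝒳 → 𝒴 → ℝ) (F : 𝒳 → 𝒴 → ℝ) : ℝ :=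
  ∑ p, jointDist PY W p * (F p.1 p.2 - ∑ q, jointDist PY W q * F q.1 q.2) ^ 2

variable (hPY : PY ∈ stdSimplex ℝ 𝒴) (hW : ∀ y, (W · y) ∈ stdSimplex ℝ 𝒳)
include hPY hW

lemma mul_le_outputDist (x : 𝒳) (y : 𝒴) : PY y * W x y ≤ outputDist PY W x :=
  single_le_sum (f := fun y => PY y * W x y) (fun y _ => mul_nonneg (hPY.1 y) ((hW y).1 x))
    (mem_univ y)

lemma sum_sum_mul_eq_one : ∑ y, ∑ x, PY y * W x y = 1 := by
  simp_rw [← mul_sum, (hW _).2, mul_one, hPY.2]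

lemma outputDist_mem_stdSimplex : outputDist PY W ∈ stdSimplex ℝ 𝒳 :=
  ⟨fun x => sum_nonneg fun y _ => mul_nonneg (hPY.1 y) ((hW y).1 x), by
    simp only [outputDist]
    rw [sum_comm]
    exact sum_sum_mul_eq_one hPY hW⟩

omit hPY hW in
lemma sum_jointDist_mul (F : 𝒳 → 𝒴 → ℝ) :
    ∑ p, jointDist PY W p * F p.1 p.2 = ∑ y, ∑ x, PY y * W x y * F x y := by
  rw [Fintype.sum_prod_type, sum_comm]
  rfl

lemma jointDist_mem_stdSimplex : jointDist PY W ∈ stdSimplex ℝ (𝒳 × 𝒴) :=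
  ⟨fun p => mul_nonneg (hPY.1 _) ((hW _).1 _), by
    simpa using (sum_jointDist_mul (PY := PY) (W := W) fun _ _ => (1 : ℝ)).trans
      (by simpa using sum_sum_mul_eq_one hPY hW)⟩

theorem mutualInfo_nonneg : 0 ≤ mutualInfo PY W := by
  have hgibbs : ∀ y x, PY y * W x y - PY y * outputDist PY W x ≤
      PY y * W x y * log (W x y / outputDist PY W x) := by
    intro y x
    rcases (hPY.1 y).eq_or_lt with hy | hy
    · simp [← hy]
    rw [← mul_div_mul_left (W x y) _ hy.ne']
    refine sub_le_mul_log_div (mul_nonneg hy.le ((hW y).1 x))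
      (mul_nonneg hy.le ((outputDist_mem_stdSimplex hPY hW).1 x)) fun h => ?_
    simp only [mul_eq_zero, hy.ne', false_or] at h
    exact le_antisymm (h ▸ mul_le_outputDist hPY hW x y) (mul_nonneg hy.le ((hW y).1 x))
  have hzero : ∑ y, ∑ x, (PY y * W x y - PY y * outputDist PY W x) = 0 := by
    simp only [sum_sub_distrib]
    rw [sum_sum_mul_eq_one hPY hW]
    simp_rw [← mul_sum, (outputDist_mem_stdSimplex hPY hW).2, mul_one, hPY.2, sub_self]
  calc 0 = (∑ y, ∑ x, (PY y * W x y - PY y * outputDist PY W x)) / log 2 := by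
        rw [hzero, zero_div]
    _ ≤ (∑ y, ∑ x, PY y * W x y * log (W x y / outputDist PY W x)) / log 2 :=
        div_le_div_of_nonneg_right (sum_le_sum fun y _ => sum_le_sum fun x _ => hgibbs y x)
          (log_pos one_lt_two).le
    _ = mutualInfo PY W := by simp_rw [mutualInfo, infoDensity, logb, mul_div_assoc', sum_div]

lemma le_outputDist_mul_rpow_infoDensity {y : 𝒴} (hy : 0 < PY y) (x : 𝒳) :
    W x y ≤ outputDist PY W x * 2 ^ infoDensity PY W x y := by
  have hPX := (outputDist_mem_stdSimplex hPY hW).1 x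
  rcases (show 0 ≤ W x y from (hW y).1 x).eq_or_lt with hWxy | hWxy
  · rw [← hWxy]
    positivity
  have hPXpos : 0 < outputDist PY W x := (mul_pos hy hWxy).trans_le (mul_le_outputDist hPY hW x y)
  rw [infoDensity, rpow_logb two_pos one_lt_two.ne' (div_pos hWxy hPXpos),
    mul_div_cancel₀ _ hPXpos.ne']

lemma rpow_neg_mul_prod_le_prod_outputDist {ι : Type*} [Fintype ι] {x : ι → 𝒳} {y : ι → 𝒴}
    (hy : ∀ i, 0 < PY (y i)) {t : ℝ} (ht : ∑ i, infoDensity PY W (x i) (y i) ≤ t) :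
    2 ^ (-t) * ∏ i, W (x i) (y i) ≤ ∏ i, outputDist PY W (x i) := by
  have hPX := (outputDist_mem_stdSimplex hPY hW).1
  calc 2 ^ (-t) * ∏ i, W (x i) (y i)
      ≤ 2 ^ (-t) * ∏ i, outputDist PY W (x i) * 2 ^ infoDensity PY W (x i) (y i) := by
        gcongr with i
        · exact fun i _ => (hW _).1 _
        · exact le_outputDist_mul_rpow_infoDensity hPY hW (hy i) _
    _ = 2 ^ (-t) * 2 ^ (∑ i, infoDensity PY W (x i) (y i)) * ∏ i, outputDist PY W (x i) := by
        rw [prod_mul_distrib, rpow_sum_of_pos two_pos]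
        ring
    _ ≤ 2 ^ (-t) * 2 ^ t * ∏ i, outputDist PY W (x i) := by
        gcongr
        · exact prod_nonneg fun i _ => hPX _
        · exact one_le_two
    _ = ∏ i, outputDist PY W (x i) := by
        rw [← rpow_add two_pos, neg_add_cancel, rpow_zero, one_mul]

omit hPY hW in
lemma sum_prod_jointDist_filter {ι : Type*} [Fintype ι] [DecidableEq ι]
    (S : (ι → 𝒳) → (ι → 𝒴) → Prop) [∀ x y, Decidable (S x y)] :
    ∑ z : ι → 𝒳 × 𝒴 with S (Prod.fst ∘ z) (Prod.snd ∘ z), ∏ i, jointDist PY W (z i) =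
      ∑ y : ι → 𝒴, (∏ i, PY (y i)) * ∑ x with S x y, ∏ i, W (x i) (y i) := by
  rw [sum_filter, ← (Equiv.arrowProdEquivProdArrow ι (fun _ => 𝒳) (fun _ => 𝒴)).symm.sum_comp,
    Fintype.sum_prod_type, sum_comm]
  refine sum_congr rfl fun y _ => ?_
  rw [sum_filter, mul_sum]
  refine sum_congr rfl fun x _ => ?_
  simp only [mul_ite, mul_zero, jointDist, prod_mul_distrib]
  rfl

end Channel

section BlockCode

variable {𝒳 𝒴 : Type*} [Fintype 𝒳] [Fintype 𝒴] {PY : 𝒴 → ℝ} {W : 𝒳 → 𝒴 → ℝ}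
  {d : 𝒳 → 𝒴 → ℝ} {dmax : ℝ}

abbrev IsTypical (PY : 𝒴 → ℝ) (W : 𝒳 → 𝒴 → ℝ) (d : 𝒳 → 𝒴 → ℝ) (θ η : ℝ) {n : ℕ}
    (x : Fin n → 𝒳) (y : Fin n → 𝒴) : Prop :=
  ∑ k, infoDensity PY W (x k) (y k) < n * θ ∧ ∑ k, d (x k) (y k) < n * η

lemma expectedDistortion_nonneg (hPY : PY ∈ stdSimplex ℝ 𝒴)
    (hW : ∀ y, (W · y) ∈ stdSimplex ℝ 𝒳) (hd : ∀ x y, 0 ≤ d x y) :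
    0 ≤ expectedDistortion PY W d :=
  sum_nonneg fun y _ => sum_nonneg fun x _ =>
    mul_nonneg (mul_nonneg (hPY.1 y) ((hW y).1 x)) (hd x y)

lemma sum_prod_sum_filter_not_isTypical_le (hPY : PY ∈ stdSimplex ℝ 𝒴)
    (hW : ∀ y, (W · y) ∈ stdSimplex ℝ 𝒳) {θ η : ℝ} (hθ : mutualInfo PY W < θ)
    (hη : expectedDistortion PY W d < η) {n : ℕ} (hn : 0 < n) :
    ∑ y : Fin n → 𝒴, (∏ k, PY (y k)) *
        ∑ x with ¬IsTypical PY W d θ η x y, ∏ k, W (x k) (y k) ≤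
      (jointVariance PY W (infoDensity PY W) / (θ - mutualInfo PY W) ^ 2 +
        jointVariance PY W d / (η - expectedDistortion PY W d) ^ 2) / n := by
  have : Nonempty (Fin n) := ⟨⟨0, hn⟩⟩
  have hJ := jointDist_mem_stdSimplex hPY hW
  have hmeanI : ∑ p, jointDist PY W p * infoDensity PY W p.1 p.2 = mutualInfo PY W :=
    sum_jointDist_mul _
  have hmeanD : ∑ p, jointDist PY W p * d p.1 p.2 = expectedDistortion PY W d :=
    sum_jointDist_mul _
  have hchebI := sum_prod_filter_le_variance_div (ι := Fin n) hJ _ (hmeanI ▸ hθ)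
  have hchebD := sum_prod_filter_le_variance_div (ι := Fin n) hJ _ (hmeanD ▸ hη)
  rw [hmeanI, Fintype.card_fin] at hchebI
  rw [hmeanD, Fintype.card_fin] at hchebD
  rw [← sum_prod_jointDist_filter fun x y => ¬IsTypical PY W d θ η x y]
  simp only [IsTypical, not_and_or, not_lt]
  exact (sum_filter_or_le (prod_apply_mem_stdSimplex fun _ => hJ).1 _ _).trans
    ((add_le_add hchebI hchebD).trans_eq (by simp only [jointVariance, hmeanI, hmeanD]; field_simp))

theorem exists_codebook_distortion_le (hPY : PY ∈ stdSimplex ℝ 𝒴)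
    (hW : ∀ y, (W · y) ∈ stdSimplex ℝ 𝒳) (hd : ∀ x y, d x y ∈ Set.Icc 0 dmax) {θ η : ℝ}
    (hθ : mutualInfo PY W < θ) (hη : expectedDistortion PY W d < η) :
    ∃ K : ℝ, ∀ n M : ℕ, 0 < n → 0 < M →
      ∃ (C : Fin M → Fin n → 𝒳) (e : (Fin n → 𝒴) → Fin M),
        ∑ y : Fin n → 𝒴, (∏ k, PY (y k)) * ((n : ℝ)⁻¹ * ∑ k, d (C (e y) k) (y k)) ≤
          η + dmax * (K / n + exp (-(M * 2 ^ (-(n * θ))))) := by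
  refine ⟨jointVariance PY W (infoDensity PY W) / (θ - mutualInfo PY W) ^ 2 +
    jointVariance PY W d / (η - expectedDistortion PY W d) ^ 2, fun n M hn hM => ?_⟩
  have : Nonempty (Fin M) := ⟨⟨0, hM⟩⟩
  have hratio : ∀ (x : Fin n → 𝒳) (y : Fin n → 𝒴), 0 < ∏ k, PY (y k) →
      IsTypical PY W d θ η x y →
      2 ^ (-(n * θ)) * ∏ k, W (x k) (y k) ≤ ∏ k, outputDist PY W (x k) := by
    intro x y hy hxy
    refine rpow_neg_mul_prod_le_prod_outputDist hPY hW (fun k => ?_) hxy.1.le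
    exact (hPY.1 _).lt_of_ne (prod_ne_zero_iff.1 hy.ne' k (mem_univ k)).symm
  obtain ⟨C, hC⟩ := exists_codebook_covering (IsTypical PY W d θ η)
    (prod_apply_mem_stdSimplex fun _ => outputDist_mem_stdSimplex hPY hW)
    (prod_apply_mem_stdSimplex fun _ => hPY)
    (fun y : Fin n → 𝒴 => prod_apply_mem_stdSimplex fun k => hW (y k)) hratio M
  choose e he using fun y : Fin n → 𝒴 => Finite.exists_min fun i => ∑ k, d (C i k) (y k)
  refine ⟨C, e, ?_⟩
  have hn' : (0 : ℝ) < n := Nat.cast_pos.2 hn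
  have hdmax : 0 ≤ dmax := by
    obtain ⟨y, -⟩ := nonempty_of_sum_ne_zero (hPY.2.symm ▸ one_ne_zero : ∑ y, PY y ≠ 0)
    exact (hd (C ⟨0, hM⟩ ⟨0, hn⟩) y).1.trans (hd _ _).2
  have hη0 : 0 ≤ η := (expectedDistortion_nonneg hPY hW fun x y => (hd x y).1).trans hη.le
  calc ∑ y : Fin n → 𝒴, (∏ k, PY (y k)) * ((n : ℝ)⁻¹ * ∑ k, d (C (e y) k) (y k))
      ≤ η + dmax * ∑ y with ∀ i, ¬IsTypical PY W d θ η (C i) y, ∏ k, PY (y k) := by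
        refine sum_mul_le_add_mul_sum_filter (prod_apply_mem_stdSimplex fun _ => hPY) _ hη0
          (fun y hy => ?_) fun y => ?_ <;> rw [inv_mul_le_iff₀ hn']
        · obtain ⟨i, hi⟩ := not_forall_not.1 hy
          exact (he y i).trans hi.2.le
        · exact (sum_le_sum fun k _ => (hd _ _).2).trans (by simp)
    _ ≤ η + dmax * (_ / n + exp (-(M * 2 ^ (-(n * θ))))) := by
        gcongr
        exact hC.trans (add_le_add_left (sum_prod_sum_filter_not_isTypical_le hPY hW hθ hη hn) _)

end BlockCode

lemma tendsto_two_rpow_natCast_mul_atTop {c : ℝ} (hc : 0 < c) :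
    Tendsto (fun n : ℕ => (2 : ℝ) ^ (n * c)) atTop atTop := by
  have hpow : (fun n : ℕ => (2 : ℝ) ^ (n * c)) = fun n => (2 ^ c) ^ n := by
    ext n
    rw [mul_comm, rpow_mul zero_le_two, rpow_natCast]
  rw [hpow]
  exact tendsto_pow_atTop_atTop_of_one_lt (one_lt_rpow one_lt_two hc)

lemma tendsto_natFloor_two_rpow_mul_two_rpow_neg {θ ρ : ℝ} (hθ : 0 ≤ θ) (hθρ : θ < ρ) :
    Tendsto (fun n : ℕ => (⌊(2 : ℝ) ^ (n * ρ)⌋₊ : ℝ) * 2 ^ (-(n * θ))) atTop atTop := by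
  refine tendsto_atTop_mono (fun n => ?_) (tendsto_atTop_add_const_right _ (-1)
    (tendsto_two_rpow_natCast_mul_atTop (sub_pos.2 hθρ)))
  have hfloor := Nat.lt_floor_add_one ((2 : ℝ) ^ (n * ρ))
  have hpos : (0 : ℝ) < 2 ^ (-(n * θ)) := rpow_pos_of_pos two_pos _
  have hle : (2 : ℝ) ^ (-(n * θ)) ≤ 1 :=
    rpow_le_one_of_one_le_of_nonpos one_le_two (neg_nonpos.2 (by positivity))
  have hsplit : (2 : ℝ) ^ (n * (ρ - θ)) = 2 ^ (n * ρ) * 2 ^ (-(n * θ)) := by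
    rw [← rpow_add two_pos]
    ring_nf
  nlinarith [mul_lt_mul_of_pos_right hfloor hpos]

/-- **Main theorem of the paper.**  For a discrete memoryless source `PY` over a finite alphabet
`𝒴`, a bounded distortion measure `d : 𝒳 × 𝒴 → [0, dmax]`, and any distortion level `D`
achievable by some test channel, source coding with feedforward can operate arbitrarily close
to the rate-distortion function `R(D)`: for every `δ, ε > 0` there are a block length `n`, an
index set of size `M ≤ 2^{n (R(D)+δ)}`, an encoder `e : 𝒴^n → {1,…,M}` and decoders
`f k : {1,…,M} × 𝒴^{k-1} → 𝒳` (the decoder of symbol `k` sees the past source symbols via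
feedforward) whose time-averaged expected distortion on an i.i.d.-`PY` block is at most
`D + ε`. -/
theorem stmt_14 {𝒳 𝒴 : Type*} [Fintype 𝒳] [Fintype 𝒴]
    (PY : 𝒴 → ℝ) (hPY0 : ∀ y, 0 ≤ PY y) (hPY1 : ∑ y, PY y = 1)
    (dmax : ℝ) (d : 𝒳 → 𝒴 → ℝ) (hd : ∀ x y, d x y ∈ Set.Icc 0 dmax)
    (D : ℝ)
    (RD : ℝ)
    (hRD : RD = sInf {r : ℝ | ∃ W : 𝒳 → 𝒴 → ℝ,
      (∀ x y, 0 ≤ W x y) ∧ (∀ y, ∑ x, W x y = 1) ∧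
      (∑ y, ∑ x, PY y * W x y * d x y ≤ D) ∧
      r = ∑ y, ∑ x, PY y * W x y * Real.logb 2 (W x y / (∑ y', PY y' * W x y'))})
    (hD : ∃ W : 𝒳 → 𝒴 → ℝ, (∀ x y, 0 ≤ W x y) ∧ (∀ y, ∑ x, W x y = 1) ∧
      ∑ y, ∑ x, PY y * W x y * d x y ≤ D)
    (δ ε : ℝ) (hδ : 0 < δ) (hε : 0 < ε) :
    ∃ n : ℕ, 1 ≤ n ∧ ∃ (M : ℕ) (e : (Fin n → 𝒴) → Fin M)
      (f : (k : Fin n) → Fin M → (Fin (k : ℕ) → 𝒴) → 𝒳),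
      (M : ℝ) ≤ 2 ^ ((n : ℝ) * (RD + δ)) ∧
      ∑ y : Fin n → 𝒴, (∏ k, PY (y k)) *
          ((n : ℝ)⁻¹ * ∑ k : Fin n,
            d (f k (e y) (fun l : Fin (k : ℕ) => y ⟨l, l.isLt.trans k.isLt⟩)) (y k))
        ≤ D + ε := by
  have hPY : PY ∈ stdSimplex ℝ 𝒴 := ⟨hPY0, hPY1⟩
  have hRD0 : 0 ≤ RD := by
    rw [hRD]
    refine Real.sInf_nonneg ?_
    rintro _ ⟨W, hW0, hW1, -, rfl⟩
    exact mutualInfo_nonneg hPY fun y => ⟨fun x => hW0 x y, hW1 y⟩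
  have hlt : RD < RD + δ / 2 := by linarith
  rw [hRD] at hlt
  obtain ⟨W₀, hW₀⟩ := hD
  obtain ⟨_, ⟨W, hW0, hW1, hWd, rfl⟩, hWI⟩ :=
    exists_lt_of_csInf_lt (by exact ⟨_, W₀, hW₀.1, hW₀.2.1, hW₀.2.2, rfl⟩) hlt
  rw [← hRD] at hWI
  obtain ⟨K, hK⟩ := exists_codebook_distortion_le hPY (fun y => ⟨fun x => hW0 x y, hW1 y⟩) hd
    (hWI : mutualInfo PY W < RD + δ / 2)
    (show expectedDistortion PY W d < D + ε / 2 by unfold expectedDistortion; linarith)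
  have herr : Tendsto (fun n : ℕ => dmax * (K / n +
      exp (-(⌊(2 : ℝ) ^ (n * (RD + δ))⌋₊ * 2 ^ (-(n * (RD + δ / 2))))))) atTop (𝓝 0) := by
    simpa using ((tendsto_const_div_atTop_nhds_zero_nat K).add (tendsto_exp_neg_atTop_nhds_zero.comp
      (tendsto_natFloor_two_rpow_mul_two_rpow_neg (by linarith) (by linarith)))).const_mul dmax
  obtain ⟨n, hn, hsmall⟩ :=
    ((eventually_gt_atTop 0).and (herr.eventually (gt_mem_nhds (half_pos hε)))).exists
  obtain ⟨C, e, hCe⟩ := hK n ⌊(2 : ℝ) ^ (n * (RD + δ))⌋₊ hn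
    (Nat.floor_pos.2 (one_le_rpow one_le_two (by positivity)))
  exact ⟨n, hn, _, e, fun k i _ => C i k, Nat.floor_le (by positivity), by linarith⟩
end
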